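/- arXiv:1207.6141 — 6 statements merged into one kernel-verified Lean document; each statement's English description precedes it below -/
import Mathlib

section
/- Cycles are rooted-contractible: for every n ≥ 3, the cycle C_n is rooted-contractible, i.e., every graph G that contains a C_n-scheme contains C_n as a rooted minor. -/
open SimpleGraph

/-- An `H`-scheme in `G`, where the embedding `f` identifies the vertices of `H`
with vertices of `G`.  It is a collection of paths `P_{uv}` in `G`, one for each
edge `uv` of `H`, such that `P_{uv}` is a `u,v`-path meeting `V(H)` exactly in
`{u, v}`, and any collection of edges of `H` whose paths share a common vertex
of `G` must have a common endpoint in `H`. -/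
structure HScheme {α β : Type} (H : SimpleGraph α) (G : SimpleGraph β) (f : α ↪ β) where
  path : ∀ u v, H.Adj u v → G.Walk (f u) (f v)
  path_symm : ∀ u v (h : H.Adj u v), path v u h.symm = (path u v h).reverse
  path_isPath : ∀ u v (h : H.Adj u v), (path u v h).IsPath
  root_mem : ∀ u v (h : H.Adj u v) (w : α), f w ∈ (path u v h).support → w = u ∨ w = v
  common_endpoint : ∀ x : β,
    (∃ u v, ∃ h : H.Adj u v, x ∈ (path u v h).support) →
    ∃ z : α, ∀ u v (h : H.Adj u v), x ∈ (path u v h).support → z = u ∨ z = v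

/-- `G` contains `H` as a rooted minor: pairwise disjoint connected branch sets
`C v ⊆ V(G)`, one for each vertex `v` of `H`, with `f v ∈ C v`, such that for every
edge `uv` of `H` there is an edge of `G` between `C u` and `C v`. -/
def RootedMinor {α β : Type} (H : SimpleGraph α) (G : SimpleGraph β) (f : α ↪ β) : Prop :=
  ∃ C : α → Set β,
    (∀ v, f v ∈ C v) ∧
    (∀ v, (G.induce (C v)).Connected) ∧
    (Pairwise fun u v => Disjoint (C u) (C v)) ∧
    (∀ u v, H.Adj u v → ∃ x ∈ C u, ∃ y ∈ C v, G.Adj x y)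

/-- `G` contains `H` as a minor: pairwise disjoint connected branch sets, one for each
vertex of `H`, such that for every edge `uv` of `H` there is an edge of `G` between the
corresponding branch sets. -/
def HasMinor {β α : Type} (G : SimpleGraph β) (H : SimpleGraph α) : Prop :=
  ∃ C : α → Set β,
    (∀ v, (G.induce (C v)).Connected) ∧
    (Pairwise fun u v => Disjoint (C u) (C v)) ∧
    (∀ u v, H.Adj u v → ∃ x ∈ C u, ∃ y ∈ C v, G.Adj x y)

/-- `H` is rooted-contractible: every (finite) graph `G` containing an `H`-scheme
contains `H` as a rooted minor. -/
def IsRootedContractible {α : Type} (H : SimpleGraph α) : Prop :=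
  ∀ (β : Type) [Fintype β] (G : SimpleGraph β) (f : α ↪ β),
    Nonempty (HScheme H G f) → RootedMinor H G f

/-- `H` is weakly rooted-contractible: every (finite) graph `G` containing an
`H`-scheme contains `H` as a minor. -/
def IsWeaklyRootedContractible {α : Type} (H : SimpleGraph α) : Prop :=
  ∀ (β : Type) [Fintype β] (G : SimpleGraph β) (f : α ↪ β),
    Nonempty (HScheme H G f) → HasMinor G H

/-!
Write `P u` for the scheme path from `u` to `u + 1` and take as branch set of `u` an initial
segment `P u[0..t u]`. Paths that are not consecutive are disjoint, so only consecutive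
segments matter. Let `m_u(c)` be the first index at which `P u` meets `P (u+1)[0..c]`; it is
antitone in `c`. The segments of `u` and `u + 1` are disjoint iff `t u < m_u(t (u+1))`, and
then adjacent if `t u + 1 = m_u(t (u+1))` or `m_u(t (u+1) + 1) ≤ t u`. These constraints are
interval-valued with consecutive intervals touching, and a discrete intermediate value
argument for their composition around the cycle yields a consistent choice of `t`, unless two
consecutive `m_u` jump at linked positions. That would put one vertex on three consecutive
paths, which the scheme forbids.
-/

namespace IntervalChain

variable (lo hi : ℕ → ℕ → ℕ)

/-- `lo i c ≤ t i ≤ hi i c` are the admissible values of `t i` given `t (i + 1) = c`. -/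
def IsChain (j : ℕ) (t : ℕ → ℕ) : Prop :=
  ∀ i < j, lo i (t (i + 1)) ≤ t i ∧ t i ≤ hi i (t (i + 1))

/-- `fiberMin j c` and `fiberMax j c` bound `t 0` over the chains of length `j` with `t j = c`;
every value in between is attained (`exists_isChain_of_mem`). -/
noncomputable def fiberMin : ℕ → ℕ → ℕ
  | 0 => id
  | j + 1 => fun c => sInf (fiberMin j '' Set.Icc (lo j c) (hi j c))

noncomputable def fiberMax : ℕ → ℕ → ℕ
  | 0 => id
  | j + 1 => fun c => (Finset.Icc (lo j c) (hi j c)).sup (fiberMax j)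

def Touching (L H : ℕ → ℕ) : Prop :=
  ∀ c, L c ≤ H (c + 1) + 1 ∧ L (c + 1) ≤ H c + 1

variable {lo hi}

theorem Touching.exists_between {L H : ℕ → ℕ} (hT : Touching L H) {a b₁ b₂ : ℕ}
    (h₁ : L b₁ ≤ a) (h₂ : a ≤ H b₂) :
    ∃ b, min b₁ b₂ ≤ b ∧ b ≤ max b₁ b₂ ∧ L b ≤ a ∧ a ≤ H b := by
  induction hd : b₂ - b₁ + (b₁ - b₂) generalizing b₁ with
  | zero => exact ⟨b₁, by omega, by omega, h₁, by rwa [show b₁ = b₂ by omega]⟩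
  | succ d ih =>
    by_cases hH : a ≤ H b₁
    · exact ⟨b₁, by omega, by omega, h₁, hH⟩
    rcases lt_or_gt_of_ne (show b₁ ≠ b₂ by rintro rfl; exact hH h₂) with hlt | hgt
    · obtain ⟨b, hb⟩ := ih (b₁ := b₁ + 1) (by have := (hT b₁).2; omega) (by omega)
      exact ⟨b, by omega⟩
    · obtain ⟨b, hb⟩ := ih (b₁ := b₁ - 1)
        (by have := (hT (b₁ - 1)).1; rw [Nat.sub_add_cancel (by omega)] at this; omega)
        (by omega)
      exact ⟨b, by omega⟩

theorem fiberMin_succ_le {j c b : ℕ} (hlo : lo j c ≤ b) (hhi : b ≤ hi j c) :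
    fiberMin lo hi (j + 1) c ≤ fiberMin lo hi j b :=
  Nat.sInf_le ⟨b, ⟨hlo, hhi⟩, rfl⟩

theorem le_fiberMax_succ {j c b : ℕ} (hlo : lo j c ≤ b) (hhi : b ≤ hi j c) :
    fiberMax lo hi j b ≤ fiberMax lo hi (j + 1) c :=
  Finset.le_sup (f := fiberMax lo hi j) (Finset.mem_Icc.2 ⟨hlo, hhi⟩)

theorem fiberMax_succ_le {M : ℕ} (h₄ : ∀ c, hi 0 c ≤ M) (j c : ℕ) :
    fiberMax lo hi (j + 1) c ≤ M := by
  induction j generalizing c with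
  | zero => exact Finset.sup_le fun b hb => (Finset.mem_Icc.1 hb).2.trans (h₄ c)
  | succ j ih => exact Finset.sup_le fun b _ => ih b

section Links

variable (h₁ : ∀ i c, lo i c ≤ hi i c)
include h₁

theorem exists_fiberMin_succ_eq (j c : ℕ) :
    ∃ b, lo j c ≤ b ∧ b ≤ hi j c ∧ fiberMin lo hi j b = fiberMin lo hi (j + 1) c := by
  obtain ⟨b, ⟨hlo, hhi⟩, hb⟩ :=
    Nat.sInf_mem (s := fiberMin lo hi j '' Set.Icc (lo j c) (hi j c))
      ⟨_, lo j c, ⟨le_rfl, h₁ j c⟩, rfl⟩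
  exact ⟨b, hlo, hhi, hb⟩

theorem exists_fiberMax_succ_eq (j c : ℕ) :
    ∃ b, lo j c ≤ b ∧ b ≤ hi j c ∧ fiberMax lo hi j b = fiberMax lo hi (j + 1) c := by
  obtain ⟨b, hb, hbe⟩ := Finset.exists_mem_eq_sup (Finset.Icc (lo j c) (hi j c))
    ⟨lo j c, Finset.mem_Icc.2 ⟨le_rfl, h₁ j c⟩⟩ (fiberMax lo hi j)
  exact ⟨b, (Finset.mem_Icc.1 hb).1, (Finset.mem_Icc.1 hb).2, hbe.symm⟩

theorem fiberMin_le_fiberMax (j c : ℕ) : fiberMin lo hi j c ≤ fiberMax lo hi j c := by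
  induction j generalizing c with
  | zero => exact le_rfl
  | succ j ih =>
    calc fiberMin lo hi (j + 1) c ≤ fiberMin lo hi j (lo j c) :=
          fiberMin_succ_le le_rfl (h₁ j c)
      _ ≤ fiberMax lo hi j (lo j c) := ih _
      _ ≤ fiberMax lo hi (j + 1) c := le_fiberMax_succ le_rfl (h₁ j c)

theorem fiberMin_succ_le_fiberMax_succ {j c c' b : ℕ} (hlo : lo j c ≤ b) (hhi : b ≤ hi j c)
    (hlo' : lo j c' ≤ b) (hhi' : b ≤ hi j c') :
    fiberMin lo hi (j + 1) c ≤ fiberMax lo hi (j + 1) c' :=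
  (fiberMin_succ_le hlo hhi).trans <|
    (fiberMin_le_fiberMax h₁ j b).trans (le_fiberMax_succ hlo' hhi')

variable (h₂ : ∀ i c, lo i c ≤ hi i (c + 1) + 1) (h₃ : ∀ i c, lo i (c + 1) ≤ hi i c)
include h₂ h₃

theorem overlap_or_jump (j c : ℕ) :
    (∃ b, lo j c ≤ b ∧ b ≤ hi j c ∧ lo j (c + 1) ≤ b ∧ b ≤ hi j (c + 1)) ∨
      lo j c = hi j (c + 1) + 1 := by
  by_cases hov : lo j c ≤ hi j (c + 1)
  · exact Or.inl ⟨max (lo j c) (lo j (c + 1)), le_max_left _ _,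
      max_le (h₁ j c) (h₃ j c), le_max_right _ _, max_le hov (h₁ j (c + 1))⟩
  · exact Or.inr (le_antisymm (h₂ j c) (by omega))

theorem touching_fiber (j : ℕ) : Touching (fiberMin lo hi j) (fiberMax lo hi j) := by
  induction j with
  | zero => intro c; simp only [fiberMin, fiberMax, id]; omega
  | succ j ih =>
    intro c
    rcases overlap_or_jump h₁ h₂ h₃ j c with ⟨b, hb₁, hb₂, hb₃, hb₄⟩ | hjump
    · exact ⟨(fiberMin_succ_le_fiberMax_succ h₁ hb₁ hb₂ hb₃ hb₄).trans (Nat.le_succ _),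
        (fiberMin_succ_le_fiberMax_succ h₁ hb₃ hb₄ hb₁ hb₂).trans (Nat.le_succ _)⟩
    · set b := hi j (c + 1)
      have hb : lo j c = b + 1 := hjump
      constructor
      · calc fiberMin lo hi (j + 1) c ≤ fiberMin lo hi j (b + 1) :=
              fiberMin_succ_le hb.le (hb ▸ h₁ j c)
          _ ≤ fiberMax lo hi j b + 1 := (ih b).2
          _ ≤ fiberMax lo hi (j + 1) (c + 1) + 1 :=
              Nat.succ_le_succ (le_fiberMax_succ (h₁ j (c + 1)) le_rfl)
      · calc fiberMin lo hi (j + 1) (c + 1) ≤ fiberMin lo hi j b :=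
              fiberMin_succ_le (h₁ j (c + 1)) le_rfl
          _ ≤ fiberMax lo hi j (b + 1) + 1 := (ih b).1
          _ ≤ fiberMax lo hi (j + 1) c + 1 :=
              Nat.succ_le_succ (le_fiberMax_succ hb.le (hb ▸ h₁ j c))

theorem exists_isChain_of_mem (j c a : ℕ) (hlo : fiberMin lo hi j c ≤ a)
    (hhi : a ≤ fiberMax lo hi j c) : ∃ t, IsChain lo hi j t ∧ t 0 = a ∧ t j = c := by
  induction j generalizing c a with
  | zero =>
    exact ⟨fun _ => a, fun i hi => absurd hi (Nat.not_lt_zero i), rfl, le_antisymm hhi hlo⟩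
  | succ j ih =>
    obtain ⟨b₁, hb₁, hb₁', he₁⟩ := exists_fiberMin_succ_eq h₁ j c
    obtain ⟨b₂, hb₂, hb₂', he₂⟩ := exists_fiberMax_succ_eq h₁ j c
    obtain ⟨b, hb, hb', hlb, hhb⟩ :=
      (touching_fiber h₁ h₂ h₃ j).exists_between (he₁ ▸ hlo) (he₂ ▸ hhi)
    obtain ⟨t, ht, ht0, htj⟩ := ih b a hlb hhb
    refine ⟨Function.update t (j + 1) c, fun i hi => ?_, by simp [ht0], by simp⟩
    rcases Nat.lt_succ_iff_lt_or_eq.1 hi with hi | rfl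
    · simpa [Function.update_of_ne (show i ≠ j + 1 by omega),
        Function.update_of_ne (show i + 1 ≠ j + 1 by omega)] using ht i hi
    · simp only [Function.update_self, Function.update_of_ne (show i ≠ i + 1 by omega), htj]
      omega

theorem jump_of_fiberMin_succ_eq_fiberMax_add_one {j c : ℕ}
    (h : fiberMin lo hi (j + 1) (c + 1) = fiberMax lo hi (j + 1) c + 1) :
    lo j c = hi j (c + 1) + 1 := by
  rcases overlap_or_jump h₁ h₂ h₃ j c with ⟨b, hb₁, hb₂, hb₃, hb₄⟩ | hjump
  · have := fiberMin_succ_le_fiberMax_succ h₁ hb₃ hb₄ hb₁ hb₂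
    omega
  · exact hjump

theorem jump_of_fiberMin_eq_fiberMax_succ_add_one {j c : ℕ}
    (h : fiberMin lo hi (j + 1) c = fiberMax lo hi (j + 1) (c + 1) + 1) :
    lo j c = hi j (c + 1) + 1 ∧
      fiberMin lo hi j (hi j (c + 1) + 1) = fiberMax lo hi j (hi j (c + 1)) + 1 := by
  rcases overlap_or_jump h₁ h₂ h₃ j c with ⟨b, hb₁, hb₂, hb₃, hb₄⟩ | hjump
  · have := fiberMin_succ_le_fiberMax_succ h₁ hb₁ hb₂ hb₃ hb₄
    omega
  refine ⟨hjump, ?_⟩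
  have := fiberMin_succ_le (lo := lo) (hi := hi) (j := j) hjump.le
    (by rw [← hjump]; exact h₁ j c)
  have := le_fiberMax_succ (lo := lo) (hi := hi) (j := j) (h₁ j (c + 1)) le_rfl
  have := (touching_fiber h₁ h₂ h₃ j (hi j (c + 1))).2
  omega

theorem exists_isChain_cyclic {n M : ℕ} (hn : 2 ≤ n) (h₄ : ∀ c, hi 0 c ≤ M)
    (hlinked : ∀ i c c', i + 1 < n → lo i c = hi i (c + 1) + 1 →
      lo (i + 1) c' = hi (i + 1) (c' + 1) + 1 → c + 1 ≠ lo (i + 1) c') :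
    ∃ t, IsChain lo hi n t ∧ t n = t 0 := by
  obtain ⟨j, rfl⟩ : ∃ j, n = j + 1 + 1 := ⟨n - 2, by omega⟩
  by_contra hno
  have hfree : ∀ c, fiberMin lo hi (j + 1 + 1) c ≤ c → fiberMax lo hi (j + 1 + 1) c < c := by
    intro c hlo
    by_contra! hhi
    obtain ⟨t, ht, ht0, htn⟩ := exists_isChain_of_mem h₁ h₂ h₃ (j + 1 + 1) c c hlo hhi
    exact hno ⟨t, ht, htn.trans ht0.symm⟩
  have hex : ∃ c, fiberMin lo hi (j + 1 + 1) c ≤ c :=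
    ⟨M, (fiberMin_le_fiberMax h₁ _ M).trans (fiberMax_succ_le h₄ _ M)⟩
  -- At the first crossing of the diagonal, the fibres of `k` and `k + 1` touch only diagonally,
  -- which forces jumps in the last two links.
  obtain ⟨k, hk⟩ : ∃ k, Nat.find hex = k + 1 := by
    refine Nat.exists_eq_succ_of_ne_zero fun h0 => ?_
    have := hfree 0 (h0 ▸ Nat.find_spec hex)
    omega
  have hbelow := hfree (k + 1) (hk ▸ Nat.find_spec hex)
  have habove : k < fiberMin lo hi (j + 1 + 1) k :=
    not_le.1 (Nat.find_min hex (by omega))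
  have := (touching_fiber h₁ h₂ h₃ (j + 1 + 1) k).1
  obtain ⟨hjump, htop⟩ :=
    jump_of_fiberMin_eq_fiberMax_succ_add_one h₁ h₂ h₃ (j := j + 1) (c := k) (by omega)
  exact hlinked j (hi (j + 1) (k + 1)) k (by omega)
    (jump_of_fiberMin_succ_eq_fiberMax_add_one h₁ h₂ h₃ htop) hjump hjump.symm

end Links

open Fin.NatCast in
theorem exists_cyclic_of_antitone {n : ℕ} [NeZero n] (hn : 2 ≤ n) {m : Fin n → ℕ → ℕ}
    (hm : ∀ u, Antitone (m u)) (hpos : ∀ u c, 0 < m u c)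
    (hlinked : ∀ u c c', m u (c + 1) < m u c → m (u + 1) (c' + 1) < m (u + 1) c' →
      m (u + 1) (c' + 1) ≠ c + 1) :
    ∃ t : Fin n → ℕ, ∀ u,
      t u < m u (t (u + 1)) ∧ (t u + 1 = m u (t (u + 1)) ∨ m u (t (u + 1) + 1) ≤ t u) := by
  obtain ⟨t, ht, hper⟩ := exists_isChain_cyclic
    (lo := fun i c => min (m i (c + 1)) (m i c - 1)) (hi := fun i c => m i c - 1)
    (fun i c => min_le_right _ _)
    (fun i c => (min_le_left _ _).trans (by have := hpos i (c + 1); omega))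
    (fun i c => (min_le_right _ _).trans (Nat.sub_le_sub_right (hm i (Nat.le_succ c)) 1))
    hn (M := m 0 0 - 1) (fun c => Nat.sub_le_sub_right (hm 0 (Nat.zero_le c)) 1)
    (fun i c c' _ hjump hjump' => by
      have := hlinked i c c'
      have := hpos i (c + 1)
      have := hpos (i + 1) (c' + 1)
      push_cast at hjump' ⊢
      omega)
  have hwrap : ∀ u : Fin n, t ((u + 1 : Fin n) : ℕ) = t (u + 1) := by
    intro u
    rcases Nat.lt_or_ge ((u : ℕ) + 1) n with h | h
    · rw [Fin.val_add_one_of_lt' h]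
    · have h' : (u : ℕ) + 1 = n := le_antisymm u.isLt h
      rw [h', hper, ← Fin.cast_val_eq_self u, ← Nat.cast_succ, Nat.succ_eq_add_one, h',
        Fin.natCast_self, Fin.val_zero]
  refine ⟨fun u => t u, fun u => ?_⟩
  have hu := ht u u.isLt
  simp only [Fin.cast_val_eq_self] at hu
  have := hpos u (t (u + 1))
  have := hm u (Nat.le_succ (t (u + 1)))
  simp only [hwrap]
  omega

end IntervalChain

namespace SimpleGraph.Walk

variable {V : Type*} {G : SimpleGraph V}

theorem mem_support_take_iff {x y w : V} (p : G.Walk x y) (a : ℕ) :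
    w ∈ (p.take a).support ↔ ∃ i ≤ a, p.getVert i = w := by
  rw [mem_support_iff_exists_getVert, take_length]
  constructor
  · rintro ⟨i, rfl, hi⟩
    have hia : i ≤ a := hi.trans (min_le_left _ _)
    exact ⟨i, hia, by rw [take_getVert, min_eq_right hia]⟩
  · rintro ⟨i, hi, rfl⟩
    refine ⟨min i p.length, ?_, min_le_min_right _ hi⟩
    rw [take_getVert, min_eq_right ((min_le_left _ _).trans hi)]
    rcases le_total i p.length with h | h
    · rw [min_eq_left h]
    · rw [min_eq_right h, getVert_length, getVert_of_length_le p h]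

variable {x y z : V} (p : G.Walk x y) (q : G.Walk y z)

noncomputable def firstMeet (k : ℕ) : ℕ :=
  sInf {i | ∃ j ≤ k, p.getVert i = q.getVert j}

variable {p q}

theorem exists_getVert_firstMeet (k : ℕ) :
    ∃ j ≤ k, p.getVert (p.firstMeet q k) = q.getVert j :=
  Nat.sInf_mem (s := {i | ∃ j ≤ k, p.getVert i = q.getVert j})
    ⟨p.length, 0, Nat.zero_le k, by simp⟩

theorem firstMeet_le {i j k : ℕ} (hj : j ≤ k) (h : p.getVert i = q.getVert j) :
    p.firstMeet q k ≤ i :=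
  Nat.sInf_le ⟨j, hj, h⟩

theorem firstMeet_le_length (k : ℕ) : p.firstMeet q k ≤ p.length :=
  firstMeet_le (Nat.zero_le k) (by simp)

theorem antitone_firstMeet : Antitone (p.firstMeet q) := fun _ _ hkk' =>
  let ⟨_, hj, h⟩ := exists_getVert_firstMeet (p := p) (q := q) _
  firstMeet_le (hj.trans hkk') h

theorem firstMeet_pos (hx : x ∉ q.support) (k : ℕ) : 0 < p.firstMeet q k := by
  obtain ⟨j, -, h⟩ := exists_getVert_firstMeet (p := p) (q := q) k
  refine Nat.pos_of_ne_zero fun h0 => hx ?_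
  rw [h0, getVert_zero] at h
  exact h ▸ q.getVert_mem_support j

theorem getVert_firstMeet_of_lt {k : ℕ} (h : p.firstMeet q (k + 1) < p.firstMeet q k) :
    p.getVert (p.firstMeet q (k + 1)) = q.getVert (k + 1) := by
  obtain ⟨j, hj, hmeet⟩ := exists_getVert_firstMeet (p := p) (q := q) (k + 1)
  obtain rfl : j = k + 1 := by
    by_contra hne
    exact (firstMeet_le (Nat.le_of_lt_succ (hj.lt_of_ne hne)) hmeet).not_gt h
  exact hmeet

theorem disjoint_support_take {a b : ℕ} (ha : a < p.firstMeet q b) :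
    Disjoint {w | w ∈ (p.take a).support} {w | w ∈ (q.take b).support} := by
  refine Set.disjoint_left.2 fun w hp hq => ?_
  obtain ⟨i, hi, rfl⟩ := (mem_support_take_iff p a).1 hp
  obtain ⟨j, hj, hij⟩ := (mem_support_take_iff q b).1 hq
  exact (firstMeet_le hj hij.symm).not_gt (hi.trans_lt ha)

theorem exists_adj_support_take {a b : ℕ} (ha : a < p.firstMeet q b) (hb : b < q.length)
    (hreach : a + 1 = p.firstMeet q b ∨ p.firstMeet q (b + 1) ≤ a) :
    ∃ v ∈ (p.take a).support, ∃ w ∈ (q.take b).support, G.Adj v w := by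
  rcases hreach with hnext | hjump
  · obtain ⟨j, hj, hmeet⟩ := exists_getVert_firstMeet (p := p) (q := q) b
    refine ⟨p.getVert a, (mem_support_take_iff p a).2 ⟨a, le_rfl, rfl⟩,
      p.getVert (a + 1), (mem_support_take_iff q b).2 ⟨j, hj, by rw [hnext, hmeet]⟩, ?_⟩
    exact p.adj_getVert_succ (ha.trans_le (firstMeet_le_length b))
  · have hmeet := getVert_firstMeet_of_lt (hjump.trans_lt ha)
    refine ⟨q.getVert (b + 1), (mem_support_take_iff p a).2 ⟨_, hjump, hmeet⟩,
      q.getVert b, (mem_support_take_iff q b).2 ⟨b, le_rfl, rfl⟩, ?_⟩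
    exact (q.adj_getVert_succ hb).symm

end SimpleGraph.Walk

theorem SimpleGraph.cycleGraph_adj_add_one {n : ℕ} (u : Fin (n + 2)) :
    (cycleGraph (n + 2)).Adj u (u + 1) :=
  cycleGraph_adj.2 (Or.inr (add_sub_cancel_left u 1))

theorem Fin.ne_add_one_add_one {n : ℕ} (u : Fin (n + 3)) : u ≠ u + 1 + 1 := by
  rw [ne_eq, add_assoc, left_eq_add]
  simp [Fin.ext_iff, Fin.val_add, Nat.mod_eq_of_lt (show 2 < n + 3 by omega)]

namespace HScheme

variable {n : ℕ} {V : Type} {G : SimpleGraph V} {f : Fin (n + 3) ↪ V}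
  (S : HScheme (cycleGraph (n + 3)) G f)

def pathSucc (u : Fin (n + 3)) : G.Walk (f u) (f (u + 1)) :=
  S.path u (u + 1) (cycleGraph_adj_add_one u)

noncomputable def meet (u : Fin (n + 3)) : ℕ → ℕ :=
  (S.pathSucc u).firstMeet (S.pathSucc (u + 1))

theorem eq_or_eq_add_one_of_mem_support {u v : Fin (n + 3)} {w : V}
    (hu : w ∈ (S.pathSucc u).support) (hv : w ∈ (S.pathSucc v).support) :
    u = v ∨ v = u + 1 ∨ u = v + 1 := by
  obtain ⟨z, hz⟩ := S.common_endpoint w ⟨u, u + 1, _, hu⟩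
  rcases hz u (u + 1) _ hu with rfl | rfl <;> rcases hz v (v + 1) _ hv with h | h
  · exact Or.inl h
  · exact Or.inr (Or.inr h)
  · exact Or.inr (Or.inl h.symm)
  · exact Or.inl (add_right_cancel h)

theorem notMem_support_pathSucc_add_one_add_one {u : Fin (n + 3)} {w : V}
    (h₀ : w ∈ (S.pathSucc u).support) (h₁ : w ∈ (S.pathSucc (u + 1)).support) :
    w ∉ (S.pathSucc (u + 1 + 1)).support := by
  intro h₂
  obtain ⟨z, hz⟩ := S.common_endpoint w ⟨u, u + 1, _, h₀⟩
  obtain rfl : z = u + 1 := by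
    rcases hz u (u + 1) _ h₀ with rfl | rfl
    · rcases hz (z + 1) (z + 1 + 1) _ h₁ with h | h
      · simp at h
      · exact absurd h (Fin.ne_add_one_add_one z)
    · rfl
  rcases hz (u + 1 + 1) (u + 1 + 1 + 1) _ h₂ with h | h
  · simp at h
  · exact Fin.ne_add_one_add_one (u + 1) h

theorem root_notMem_support_pathSucc (u : Fin (n + 3)) :
    f u ∉ (S.pathSucc (u + 1)).support := by
  intro h
  rcases S.root_mem (u + 1) (u + 1 + 1) _ u h with h | h
  · simp at h
  · exact Fin.ne_add_one_add_one u h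

theorem meet_pos (u : Fin (n + 3)) (c : ℕ) : 0 < S.meet u c :=
  Walk.firstMeet_pos (S.root_notMem_support_pathSucc u) c

theorem antitone_meet (u : Fin (n + 3)) : Antitone (S.meet u) :=
  Walk.antitone_firstMeet

/-- The vertex at which both jumps happen would lie on three consecutive paths. -/
theorem meet_ne_of_lt_of_lt {u : Fin (n + 3)} {c c' : ℕ} (h : S.meet u (c + 1) < S.meet u c)
    (h' : S.meet (u + 1) (c' + 1) < S.meet (u + 1) c') : S.meet (u + 1) (c' + 1) ≠ c + 1 := by
  intro heq
  have h₀ := Walk.getVert_firstMeet_of_lt h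
  have h₂ := Walk.getVert_firstMeet_of_lt h'
  rw [show (S.pathSucc (u + 1)).firstMeet _ (c' + 1) = c + 1 from heq] at h₂
  refine S.notMem_support_pathSucc_add_one_add_one (w := (S.pathSucc (u + 1)).getVert (c + 1)) ?_
    (Walk.getVert_mem_support _ _) ?_
  · exact h₀ ▸ Walk.getVert_mem_support _ _
  · exact h₂ ▸ Walk.getVert_mem_support _ _

theorem rootedMinor_of_meet (t : Fin (n + 3) → ℕ)
    (ht : ∀ u, t u < S.meet u (t (u + 1)) ∧
      (t u + 1 = S.meet u (t (u + 1)) ∨ S.meet u (t (u + 1) + 1) ≤ t u)) :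
    RootedMinor (cycleGraph (n + 3)) G f := by
  set C : Fin (n + 3) → Set V := fun u => {w | w ∈ ((S.pathSucc u).take (t u)).support}
  have hsub : ∀ {u w}, w ∈ C u → w ∈ (S.pathSucc u).support := fun hw => by
    obtain ⟨i, -, rfl⟩ := (Walk.mem_support_take_iff _ _).1 hw
    exact Walk.getVert_mem_support _ _
  have hsucc : ∀ u, ∃ x ∈ C u, ∃ y ∈ C (u + 1), G.Adj x y := fun u =>
    Walk.exists_adj_support_take (ht u).1
      ((ht (u + 1)).1.trans_le (Walk.firstMeet_le_length _)) (ht u).2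
  refine ⟨C, fun u => Walk.start_mem_support _, fun u => Walk.connected_induce_support _,
    fun u v huv => Set.disjoint_left.2 fun w hu hv => ?_, fun a b hab => ?_⟩
  · rcases S.eq_or_eq_add_one_of_mem_support (hsub hu) (hsub hv) with h | rfl | rfl
    · exact huv h
    · exact Set.disjoint_left.1 (Walk.disjoint_support_take (ht u).1) hu hv
    · exact Set.disjoint_left.1 (Walk.disjoint_support_take (ht v).1) hv hu
  · rcases cycleGraph_adj.1 hab with h | h
    · obtain ⟨x, hx, y, hy, hxy⟩ := hsucc b
      rw [sub_eq_iff_eq_add'] at h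
      exact ⟨y, h ▸ hy, x, hx, hxy.symm⟩
    · rw [sub_eq_iff_eq_add'] at h
      exact h ▸ hsucc a

end HScheme

/-- For every `n ≥ 3`, the cycle `C_n` is rooted-contractible. -/
theorem cycles_rooted_contractible (n : ℕ) (hn : 3 ≤ n) :
    IsRootedContractible (SimpleGraph.cycleGraph n) := by
  obtain ⟨n, rfl⟩ : ∃ k, n = k + 3 := ⟨n - 3, by omega⟩
  rintro β _ G f ⟨S⟩
  obtain ⟨t, ht⟩ := IntervalChain.exists_cyclic_of_antitone (by omega)
    S.antitone_meet S.meet_pos fun _ _ _ => S.meet_ne_of_lt_of_lt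
  exact S.rootedMinor_of_meet t ht
end

section
/- Forests are rooted-contractible: every forest H is rooted-contractible, i.e., every graph G that contains an H-scheme contains H as a rooted minor. -/
open SimpleGraph

/-!
Induction on the number of non-isolated vertices of `G`. If every path of the scheme is a single
edge, the roots themselves are branch sets. Otherwise some edge `uv` of `H` has a path of length at
least two whose second vertex `x` lies only on paths of edges at `u`: if not, the common endpoint
at `x` shows that some edge `vt` with `t ≠ u` again has a long path, and iterating yields
arbitrarily long non-backtracking walks in the finite forest `H`. Contracting the edge `f u x`
turns the scheme into a scheme of a graph with fewer non-isolated vertices, and the rooted minor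
found there lifts back to `G` by adding `x` to the branch set of `u`.
-/

theorem Function.update_id_ne {V : Type*} [DecidableEq V] {r x : V} (hrx : r ≠ x) (y : V) :
    Function.update id x r y ≠ x := by
  by_cases hy : y = x <;> simp [hy, hrx]

namespace SimpleGraph

variable {V W : Type*} {G : SimpleGraph V}

theorem Walk.IsPath.eq_or_eq_of_snd_eq {a b y : V} {p : G.Walk a b} (hp : p.IsPath)
    (hsnd : p.snd = b) (hy : y ∈ p.support) : y = a ∨ y = b := by
  cases p with
  | nil => simpa using hy
  | cons hadj q =>
    rw [snd_cons] at hsnd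
    subst hsnd
    obtain rfl := (isPath_iff_nil.1 hp.of_cons).eq_nil
    simpa using hy

theorem Walk.exists_walk_map_support_subset (g : V → W) {a b : V} (p : G.Walk a b) :
    ∃ q : (G.map g).Walk (g a) (g b), q.support ⊆ p.support.map g := by
  induction p with
  | nil => exact ⟨nil, by simp⟩
  | @cons a m b hadj p ih =>
    obtain ⟨q, hq⟩ := ih
    by_cases hgm : g a = g m
    · exact ⟨q.copy hgm.symm rfl, by
        simpa [support_copy] using List.Subset.trans hq (List.subset_cons_self _ _)⟩
    · exact ⟨cons ⟨hgm, a, m, hadj, rfl, rfl⟩ q, List.cons_subset_cons _ hq⟩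

theorem connected_induce_preimage {g : V → W} {s : Set W}
    (hfib : ∀ p ∈ s, (G.induce (g ⁻¹' {p})).Connected)
    (hs : ((G.map g).induce s).Connected) : (G.induce (g ⁻¹' s)).Connected := by
  have fibre : ∀ (p : s) (a b : g ⁻¹' s), g a = p → g b = p →
      (G.induce (g ⁻¹' s)).Reachable a b := by
    intro p a b ha hb
    have hle : g ⁻¹' {(p : W)} ⊆ g ⁻¹' s := Set.preimage_mono (by simp)
    exact ((hfib p p.2).preconnected ⟨a, ha⟩ ⟨b, hb⟩).map (G.induceHomOfLE hle).toHom
  have lift : ∀ {p q : s} (w : ((G.map g).induce s).Walk p q) (a b : g ⁻¹' s),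
      g a = p → g b = q → (G.induce (g ⁻¹' s)).Reachable a b := by
    intro p q w
    induction w with
    | nil => exact fibre _
    | @cons p m q hadj w ih =>
      intro a b ha hb
      obtain ⟨-, c, d, hcd, hc, hd⟩ := hadj
      have hcs : g c ∈ s := hc ▸ p.2
      have hds : g d ∈ s := hd ▸ m.2
      exact (fibre p a ⟨c, hcs⟩ ha hc).trans
        ((Adj.reachable (G := G.induce _) (u := ⟨c, hcs⟩) (v := ⟨d, hds⟩) hcd).trans
          (ih ⟨d, hds⟩ b hd hb))
  obtain ⟨p, hp⟩ := hs.nonempty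
  obtain ⟨⟨a, ha⟩⟩ := (hfib p hp).nonempty
  have ha : g a = p := ha
  refine (connected_iff_exists_forall_reachable _).2
    ⟨⟨a, show g a ∈ s from ha ▸ hp⟩, fun b => ?_⟩
  obtain ⟨w⟩ := hs.preconnected ⟨p, hp⟩ ⟨g b, b.2⟩
  exact lift w _ b ha rfl

theorem IsAcyclic.not_of_forall_exists_nonbacktracking [Finite V] (hG : G.IsAcyclic)
    {D : V → V → Prop} (hadj : ∀ u v, D u v → G.Adj u v)
    (hstep : ∀ u v, D u v → ∃ t, t ≠ u ∧ D v t) (u v : V) : ¬ D u v := by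
  have := Fintype.ofFinite V
  intro huv
  have long : ∀ n : ℕ, ∃ (a b : V) (p : G.Walk a b), p.IsPath ∧ n ≤ p.length ∧
      D p.penultimate b := by
    intro n
    induction n with
    | zero => exact ⟨u, v, .cons (hadj u v huv) .nil, by simp [(hadj u v huv).ne], by simp, huv⟩
    | succ n ih =>
      obtain ⟨a, b, p, hp, hlen, hD⟩ := ih
      obtain ⟨t, htp, hbt⟩ := hstep _ _ hD
      have hbt' := hadj b t hbt
      have ht : t ∉ p.support := fun ht => htp (hG.eq_penultimate_of_adj_end hp hbt' ht)
      exact ⟨a, t, p.concat hbt', hp.concat ht hbt', by rw [Walk.length_concat]; omega,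
        by simpa using hbt⟩
  obtain ⟨a, b, p, hp, hlen, -⟩ := long (Fintype.card V)
  exact (hp.length_lt.trans_le hlen).false

section Contraction

variable [DecidableEq V] {r x : V}

-- `G.map (Function.update id x r)` is `G` with the edge `rx` contracted onto `r`; the vertex `x`
-- is left behind, isolated.

theorem connected_induce_preimage_update (hrx : G.Adj r x) {p : V}
    (hp : p ∈ Set.range (Function.update id x r)) :
    (G.induce (Function.update id x r ⁻¹' {p})).Connected := by
  obtain ⟨y, rfl⟩ := hp
  have hpx := Function.update_id_ne hrx.ne y
  generalize Function.update id x r y = p at hpx ⊢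
  by_cases hpr : p = r
  · have : Function.update id x r ⁻¹' {p} = {r, x} := by
      ext z; by_cases hz : z = x <;> simp [hz, hpr]
    rw [this]
    exact induce_pair_connected_of_adj hrx
  · have : Function.update id x r ⁻¹' {p} = {p} := by
      ext z; by_cases hz : z = x <;> simp [hz, Ne.symm hpr, Ne.symm hpx]
    rw [this, induce_singleton_eq_top]
    exact connected_top

theorem support_map_update_ssubset (hrx : G.Adj r x) :
    (G.map (Function.update id x r)).support ⊂ G.support := by
  refine (Set.ssubset_iff_of_subset ?_).2 ⟨x, ⟨r, hrx.symm⟩, ?_⟩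
  · rintro - ⟨-, -, c, d, hcd, rfl, -⟩
    by_cases hc : c = x
    · simpa [hc] using ⟨x, hrx⟩
    · simpa [hc] using ⟨d, hcd⟩
  · rintro ⟨-, -, c, -, -, hc, -⟩
    exact Function.update_id_ne hrx.ne c hc

end Contraction

end SimpleGraph

theorem RootedMinor.of_map {α β : Type} {H : SimpleGraph α} {G : SimpleGraph β} {f : α ↪ β}
    {g : β → β} (hgf : ∀ w, g (f w) = f w)
    (hfib : ∀ p ∈ Set.range g, (G.induce (g ⁻¹' {p})).Connected)
    (hm : RootedMinor H (G.map g) f) : RootedMinor H G f := by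
  obtain ⟨C, hroot, hconn, hdisj, hadj⟩ := hm
  have hrange w : C w ⊆ Set.range g := by
    intro p hp
    by_cases hpw : p = f w
    · exact ⟨f w, hpw ▸ hgf w⟩
    · obtain ⟨q, -, c, -, -, hc, -⟩ := ((hconn w).preconnected ⟨p, hp⟩ ⟨f w, hroot w⟩)
        |>.nonempty_neighborSet_left (by simpa using hpw)
      exact ⟨c, hc⟩
  refine ⟨fun w => g ⁻¹' C w, fun w => by simpa [hgf] using hroot w,
    fun w => connected_induce_preimage (fun p hp => hfib p (hrange w hp)) (hconn w),
    fun a b hab => (hdisj hab).preimage g, fun a b hab => ?_⟩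
  obtain ⟨p, hp, q, hq, -, c, d, hcd, rfl, rfl⟩ := hadj a b hab
  exact ⟨c, hp, d, hq, hcd⟩

namespace HScheme

variable {α β : Type} {H : SimpleGraph α} {G : SimpleGraph β} {f : α ↪ β}

theorem nonempty_of_forall_exists_walk (S : HScheme H G f) {G' : SimpleGraph β}
    (hq : ∀ a b (h : H.Adj a b),
      ∃ q : G'.Walk (f a) (f b), q.support ⊆ (S.path a b h).support) :
    Nonempty (HScheme H G' f) := by
  classical
  choose q hq using hq
  -- Orient each edge by a well-order so that the chosen paths are reverses of each other.
  let P a b (h : H.Adj a b) : G'.Walk (f a) (f b) :=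
    if WellOrderingRel a b then (q a b h).bypass else (q b a h.symm).bypass.reverse
  have hP a b (h : H.Adj a b) : (P a b h).support ⊆ (S.path a b h).support := by
    by_cases hab : WellOrderingRel a b
    · simpa [P, hab] using List.Subset.trans (q a b h).support_bypass_subset_support (hq a b h)
    · intro y hy
      simp only [P, hab, if_false, Walk.support_reverse, List.mem_reverse] at hy
      simpa [S.path_symm a b h] using
        hq b a h.symm ((q b a h.symm).support_bypass_subset_support hy)
  refine ⟨⟨P, fun a b h => ?_, fun a b h => ?_,
    fun a b h w hw => S.root_mem a b h w (hP a b h hw), fun y ⟨a, b, h, hy⟩ => ?_⟩⟩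
  · by_cases hab : WellOrderingRel a b
    · simp [P, hab, asymm hab]
    · have hba : WellOrderingRel b a :=
        (trichotomous_of WellOrderingRel a b).resolve_left hab |>.resolve_left h.ne
      simp [P, hab, hba]
  · by_cases hab : WellOrderingRel a b <;> simp [P, hab, Walk.bypass_isPath]
  · obtain ⟨z, hz⟩ := S.common_endpoint y ⟨a, b, h, hP a b h hy⟩
    exact ⟨z, fun a b h hy => hz a b h (hP a b h hy)⟩

theorem nonempty_map_update [DecidableEq β] (S : HScheme H G f) {r x : β} (hx : x ∉ Set.range f)
    (hr : ∀ a b (h : H.Adj a b), x ∈ (S.path a b h).support → r ∈ (S.path a b h).support) :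
    Nonempty (HScheme H (G.map (Function.update id x r)) f) := by
  refine S.nonempty_of_forall_exists_walk fun a b h => ?_
  obtain ⟨q, hq⟩ := (S.path a b h).exists_walk_map_support_subset (Function.update id x r)
  have hfix (w : α) : Function.update id x r (f w) = f w :=
    Function.update_of_ne (fun e => hx ⟨w, e⟩) _ _
  refine ⟨q.copy (hfix a) (hfix b), fun y hy => ?_⟩
  rw [Walk.support_copy] at hy
  obtain ⟨z, hz, rfl⟩ := List.mem_map.1 (hq hy)
  by_cases hzx : z = x
  · subst hzx
    simpa using hr a b h hz
  · simpa [hzx] using hz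

theorem snd_not_mem_range (S : HScheme H G f) {u v : α} {h : H.Adj u v}
    (hlong : (S.path u v h).snd ≠ f v) : (S.path u v h).snd ∉ Set.range f := by
  have hnil : ¬ (S.path u v h).Nil := Walk.not_nil_of_ne (f.injective.ne h.ne)
  rintro ⟨w, hw⟩
  rcases S.root_mem u v h w (hw ▸ Walk.getVert_mem_support _ 1) with rfl | rfl
  · exact (Walk.adj_snd hnil).ne hw
  · exact hlong hw.symm

theorem snd_ne_of_mem_support (S : HScheme H G f) {a b : α} {h : H.Adj a b} {y : β}
    (hy : y ∈ (S.path a b h).support) (hyf : y ∉ Set.range f) : (S.path a b h).snd ≠ f b := by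
  intro hsnd
  rcases (S.path_isPath a b h).eq_or_eq_of_snd_eq hsnd hy with rfl | rfl <;> exact hyf ⟨_, rfl⟩

theorem exists_snd_ne_of_snd_mem (S : HScheme H G f) {u v a b : α} {h : H.Adj u v}
    {h' : H.Adj a b} (hlong : (S.path u v h).snd ≠ f v)
    (hmem : (S.path u v h).snd ∈ (S.path a b h').support) (hua : u ≠ a) (hub : u ≠ b) :
    ∃ t, t ≠ u ∧ ∃ ht : H.Adj v t, (S.path v t ht).snd ≠ f t := by
  have hx := S.snd_not_mem_range hlong
  have hsnd := Walk.getVert_mem_support (S.path u v h) 1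
  obtain ⟨z, hz⟩ := S.common_endpoint _ ⟨u, v, h, hsnd⟩
  have hzv : z = v := by
    rcases hz u v h hsnd with rfl | rfl
    · rcases hz a b h' hmem with rfl | rfl <;> contradiction
    · rfl
  subst hzv
  rcases hz a b h' hmem with rfl | rfl
  · exact ⟨b, hub.symm, h', S.snd_ne_of_mem_support hmem hx⟩
  · refine ⟨a, hua.symm, h'.symm, S.snd_ne_of_mem_support ?_ hx⟩
    simpa [S.path_symm a z h'] using hmem

theorem exists_contractible_edge [Finite α] (hH : H.IsAcyclic) (S : HScheme H G f)
    (hlong : ¬ ∀ u v (h : H.Adj u v), (S.path u v h).snd = f v) :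
    ∃ r x, G.Adj r x ∧ x ∉ Set.range f ∧
      ∀ a b (h : H.Adj a b), x ∈ (S.path a b h).support → r ∈ (S.path a b h).support := by
  obtain ⟨u, v, h, hlong, hgood⟩ : ∃ u v, ∃ h : H.Adj u v, (S.path u v h).snd ≠ f v ∧
      ∀ a b (h' : H.Adj a b),
        (S.path u v h).snd ∈ (S.path a b h').support → u = a ∨ u = b := by
    by_contra! hbad
    refine hlong fun u v h => of_not_not fun hne => ?_
    refine hH.not_of_forall_exists_nonbacktracking (D := fun u v => ∃ h : H.Adj u v,
      (S.path u v h).snd ≠ f v) (fun u v ⟨h, _⟩ => h) ?_ u v ⟨h, hne⟩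
    rintro u v ⟨h, hne⟩
    obtain ⟨a, b, h', hmem, hua, hub⟩ := hbad u v h hne
    exact S.exists_snd_ne_of_snd_mem hne hmem hua hub
  have hnil : ¬ (S.path u v h).Nil := Walk.not_nil_of_ne (f.injective.ne h.ne)
  refine ⟨f u, _, Walk.adj_snd hnil, S.snd_not_mem_range hlong, fun a b h' hx => ?_⟩
  rcases hgood a b h' hx with rfl | rfl
  · exact Walk.start_mem_support _
  · exact Walk.end_mem_support _

theorem rootedMinor_of_forall_snd_eq (S : HScheme H G f)
    (hshort : ∀ a b (h : H.Adj a b), (S.path a b h).snd = f b) : RootedMinor H G f := by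
  refine ⟨fun w => {f w}, fun w => rfl, fun w => by simp [connected_top], fun a b hab => ?_,
    fun a b h => ⟨f a, rfl, f b, rfl, ?_⟩⟩
  · simpa using f.injective.ne hab
  · have hnil : ¬ (S.path a b h).Nil := Walk.not_nil_of_ne (f.injective.ne h.ne)
    simpa [hshort a b h] using Walk.adj_snd hnil

end HScheme

theorem forests_rooted_contractible_general {α : Type} (H : SimpleGraph α)
    (hH : H.IsAcyclic) : IsRootedContractible H := by
  classical
  intro β _ G f hS
  have : Finite α := Finite.of_injective f f.injective
  induction hn : G.support.ncard using Nat.strong_induction_on generalizing G with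
  | _ n ih =>
  obtain ⟨S⟩ := hS
  by_cases hshort : ∀ u v (h : H.Adj u v), (S.path u v h).snd = f v
  · exact S.rootedMinor_of_forall_snd_eq hshort
  obtain ⟨r, x, hrx, hx, hr⟩ := S.exists_contractible_edge hH hshort
  refine RootedMinor.of_map (fun w => Function.update_of_ne (fun e => hx ⟨w, e⟩) _ _)
    (fun p hp => connected_induce_preimage_update hrx hp) ?_
  exact ih _ (hn ▸ Set.ncard_lt_ncard (support_map_update_ssubset hrx)) _
    (S.nonempty_map_update hx hr) rfl

/-- Every forest is rooted-contractible. -/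
theorem forests_rooted_contractible {α : Type} [Fintype α] (H : SimpleGraph α)
    (hH : H.IsAcyclic) : IsRootedContractible H :=
  forests_rooted_contractible_general H hH
end

section
/- Let H be a triangle-free graph. Then H is M'-contractible if and only if H has a stable set that induces an M'-contraction. -/
open SimpleGraph

/-- The graph `M'(H)`: vertices are `(v, i)` for `v ∈ V(H)` and `i ∈ {1,2}` (here
`false` plays the role of `1` and `true` the role of `2`); `(u,i)` is adjacent to
`(v,j)` iff `uv ∈ E(H)` and at least one of `i, j` equals `2`. -/
def Mprime {α : Type} (H : SimpleGraph α) : SimpleGraph (α × Bool) where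
  Adj x y := H.Adj x.1 y.1 ∧ (x.2 = true ∨ y.2 = true)
  symm := by
    constructor
    intro x y h
    exact ⟨h.1.symm, h.2.symm⟩
  loopless := by
    constructor
    intro x h
    exact H.loopless.irrefl x.1 h.1

/-- `H` is M'-contractible: `M'(H)` contains `H` as a rooted minor with each vertex
`v` of `H` rooted at `v₁ = (v, false)`. -/
def MprimeContractible {α : Type} (H : SimpleGraph α) : Prop :=
  ∃ C : α → Set (α × Bool),
    (∀ v, (v, false) ∈ C v) ∧
    (∀ v, ((Mprime H).induce (C v)).Connected) ∧
    (Pairwise fun u v => Disjoint (C u) (C v)) ∧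
    (∀ u v, H.Adj u v → ∃ x ∈ C u, ∃ y ∈ C v, (Mprime H).Adj x y)

/-- The set of neighbors of a set `S` of vertices. -/
def setNeighbors {α : Type} (H : SimpleGraph α) (S : Set α) : Set α :=
  {w | ∃ v ∈ S, H.Adj v w}

/-- `S` is a stable (independent) set in `H`. -/
def IsStableSet {α : Type} (H : SimpleGraph α) (S : Set α) : Prop :=
  ∀ u ∈ S, ∀ v ∈ S, ¬ H.Adj u v

/-- `H` has a shift automorphism: an automorphism `π` with every vertex `v`
adjacent to `π v`.  (The graph with no vertices trivially has one.) -/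
def HasShiftAutomorphism {α : Type} (H : SimpleGraph α) : Prop :=
  ∃ π : α ≃ α, (∀ a b, H.Adj a b → H.Adj (π a) (π b)) ∧ (∀ a, H.Adj a (π a))

/-- The set `S` induces an M'-contraction in `H`: there is a matching among the
edges between `S` and `N(S)` covering every vertex of `N(S)` (encoded by a map `g`
assigning to each `w ∈ N(S)` its partner `g w ∈ S`, injectively), and the induced
subgraph `H − (S ∪ N(S))` has a shift automorphism. -/
def InducesMprimeContraction {α : Type} (H : SimpleGraph α) (S : Set α) : Prop :=
  (∃ g : α → α, Set.InjOn g (setNeighbors H S) ∧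
      ∀ w ∈ setNeighbors H S, g w ∈ S ∧ H.Adj (g w) w) ∧
  HasShiftAutomorphism (H.induce (S ∪ setNeighbors H S)ᶜ)

/-!
Record a rooted `H`-minor of `M'(H)` by the sets `Z v` of vertices `x` whose second copy `x₂` lies
in the branch set of `v`; the first copies are forced, `v₁` being the root of `v`. Let `S` be the
set of `v` with `Z v = ∅`, `N = N(S)` and `T` the rest. An edge `sw` with `s ∈ S` can only be
realised by `s₁ y₂` with `y ∈ Z w ∩ N`, and each `z ∈ T` is adjacent to some `y ∈ Z z ∩ T`. As the
sets `Z v` are disjoint and `H` is finite, these choices are permutations of `N` and of `T`, so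
`N ∩ Z v` and `T ∩ Z v` are singletons or empty. Triangle-freeness then gives every `w ∈ N` a
neighbour in `Z w ∩ S` (the matching) and makes `z ↦ T ∩ Z z` a shift automorphism of `H[T]`.
Conversely, from `S`, a matching `g` and a shift `π`, take `Z v` to be `∅`, `{v, g v}` or `{π v}`
according as `v` lies in `S`, `N` or `T`.
-/

open Set Function

lemma Pairwise.eq_of_mem_of_mem {ι β : Type*} {Y : ι → Set β} (hY : Pairwise (Disjoint on Y))
    {x : β} {a b : ι} (ha : x ∈ Y a) (hb : x ∈ Y b) : a = b :=
  hY.eq (not_disjoint_iff.2 ⟨x, ha, hb⟩)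

/-- Choosing an element of `A ∩ Y a` for each `a ∈ A` permutes `A`, so these choices exhaust `A`. -/
lemma Set.inter_eq_singleton_of_pairwise_disjoint {ι : Type*} [Finite ι] {A : Set ι}
    {Y : ι → Set ι} (hY : Pairwise (Disjoint on Y)) (hA : ∀ a ∈ A, (A ∩ Y a).Nonempty)
    {x v : ι} (hx : x ∈ A) (hxv : x ∈ Y v) : v ∈ A ∧ A ∩ Y v = {x} := by
  choose! f hf using hA
  have hsurj : SurjOn f A A :=
    (((toFinite A).injOn_iff_bijOn_of_mapsTo fun a ha ↦ (hf a ha).1).1 fun a ha b hb hab ↦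
      hY.eq_of_mem_of_mem (hf a ha).2 (hab ▸ (hf b hb).2)).surjOn
  have eq_f : ∀ y ∈ A, ∀ w, y ∈ Y w → w ∈ A ∧ y = f w := by
    intro y hy w hyw
    obtain ⟨a, ha, rfl⟩ := hsurj hy
    obtain rfl := hY.eq_of_mem_of_mem (hf a ha).2 hyw
    exact ⟨ha, rfl⟩
  obtain ⟨hv, rfl⟩ := eq_f x hx v hxv
  exact ⟨hv, subset_antisymm (fun y hy ↦ (eq_f y hy.1 v hy.2).2) (singleton_subset_iff.2 ⟨hx, hxv⟩)⟩

namespace SimpleGraph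

lemma induce_connected_of_forall_adj {β : Type*} {G : SimpleGraph β} {s : Set β} {c : β}
    (hc : c ∈ s) (h : ∀ x ∈ s, x = c ∨ G.Adj c x) : (G.induce s).Connected := by
  rw [connected_iff_exists_forall_reachable]
  refine ⟨⟨c, hc⟩, fun ⟨x, hx⟩ ↦ ?_⟩
  rcases h x hx with rfl | hcx
  · rfl
  · exact Adj.reachable (G := G.induce s) hcx

lemma CliqueFree.not_adj_of_adj_of_adj {β : Type*} {G : SimpleGraph β} (hG : G.CliqueFree 3)
    {a b c : β} (hab : G.Adj a b) (hac : G.Adj a c) : ¬G.Adj b c :=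
  fun hbc ↦ isIndepSet_neighborSet_of_triangleFree G hG a hab hac hbc.ne hbc

end SimpleGraph

open SimpleGraph

variable {α : Type}

lemma HasShiftAutomorphism.exists_shift_of_induce {H : SimpleGraph α} {T : Set α}
    (h : HasShiftAutomorphism (H.induce T)) :
    ∃ p : α → α, MapsTo p T T ∧ InjOn p T ∧ (∀ v ∈ T, H.Adj v (p v)) ∧
      ∀ u ∈ T, ∀ v ∈ T, H.Adj u v → H.Adj (p u) (p v) := by
  obtain ⟨π, hhom, hshift⟩ := h
  set p := extend Subtype.val (fun x : T ↦ (π x : α)) id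
  have hp : ∀ x : T, p x = π x := Subtype.val_injective.extend_apply _ _
  refine ⟨p, fun v hv ↦ ?_, fun u hu v hv huv ↦ ?_, fun v hv ↦ ?_, fun u hu v hv huv ↦ ?_⟩
  · exact hp ⟨v, hv⟩ ▸ (π _).2
  · rw [hp ⟨u, hu⟩, hp ⟨v, hv⟩] at huv
    exact congrArg Subtype.val (π.injective (Subtype.ext huv))
  · exact hp ⟨v, hv⟩ ▸ hshift ⟨v, hv⟩
  · exact hp ⟨u, hu⟩ ▸ hp ⟨v, hv⟩ ▸ hhom ⟨u, hu⟩ ⟨v, hv⟩ huv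

def branchOf (Z : α → Set α) (v : α) : Set (α × Bool) :=
  {q | q = (v, false) ∨ q.2 = true ∧ q.1 ∈ Z v}

section branchOf

variable {Z : α → Set α} {x v : α}

@[simp]
lemma mem_branchOf_false : (x, false) ∈ branchOf Z v ↔ x = v := by
  simp [branchOf]

@[simp]
lemma mem_branchOf_true : (x, true) ∈ branchOf Z v ↔ x ∈ Z v := by
  simp [branchOf]

lemma pairwise_disjoint_branchOf (hZ : Pairwise (Disjoint on Z)) :
    Pairwise (Disjoint on branchOf Z) := by
  intro u v huv
  rw [Function.onFun, Set.disjoint_left]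
  rintro ⟨x, _ | _⟩ hu hv
  · exact huv ((mem_branchOf_false.1 hu).symm.trans (mem_branchOf_false.1 hv))
  · exact disjoint_left.1 (hZ huv) (mem_branchOf_true.1 hu) (mem_branchOf_true.1 hv)

lemma exists_mprime_adj_branchOf_iff {H : SimpleGraph α} {u : α} :
    (∃ p ∈ branchOf Z u, ∃ q ∈ branchOf Z v, (Mprime H).Adj p q) ↔
      (∃ y ∈ Z v, H.Adj u y) ∨ (∃ x ∈ Z u, H.Adj x v) ∨ ∃ x ∈ Z u, ∃ y ∈ Z v, H.Adj x y := by
  constructor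
  · rintro ⟨⟨x, _ | _⟩, hp, ⟨y, _ | _⟩, hq, hxy, hb⟩
    · simp at hb
    · exact .inl ⟨y, mem_branchOf_true.1 hq, mem_branchOf_false.1 hp ▸ hxy⟩
    · exact .inr (.inl ⟨x, mem_branchOf_true.1 hp, mem_branchOf_false.1 hq ▸ hxy⟩)
    · exact .inr (.inr ⟨x, mem_branchOf_true.1 hp, y, mem_branchOf_true.1 hq, hxy⟩)
  · rintro (⟨y, hy, huy⟩ | ⟨x, hx, hxv⟩ | ⟨x, hx, y, hy, hxy⟩)
    · exact ⟨(u, false), by simp, (y, true), by simpa, huy, .inr rfl⟩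
    · exact ⟨(x, true), by simpa, (v, false), by simp, hxv, .inl rfl⟩
    · exact ⟨(x, true), by simpa, (y, true), by simpa, hxy, .inl rfl⟩

end branchOf

/-- A rooted `H`-minor of `M'(H)` with the branch sets `branchOf Z v`. -/
structure IsMprimeModel (H : SimpleGraph α) (Z : α → Set α) : Prop where
  pairwise_disjoint : Pairwise (Disjoint on Z)
  connected : ∀ v, ((Mprime H).induce (branchOf Z v)).Connected
  exists_adj : ∀ u v, H.Adj u v → ∃ p ∈ branchOf Z u, ∃ q ∈ branchOf Z v, (Mprime H).Adj p q

lemma mprimeContractible_iff {H : SimpleGraph α} :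
    MprimeContractible H ↔ ∃ Z, IsMprimeModel H Z := by
  constructor
  · rintro ⟨C, hroot, hconn, hdisj, hadj⟩
    set Z : α → Set α := fun v ↦ (·, true) ⁻¹' C v
    -- a first copy `(x, false)` lies in the branch set of its own root `x`
    have hC : C = branchOf Z := by
      funext v
      ext ⟨x, _ | _⟩
      · refine ⟨fun hx ↦ mem_branchOf_false.2 ?_, fun hx ↦ mem_branchOf_false.1 hx ▸ hroot v⟩
        by_contra hxv
        exact Set.disjoint_left.1 (hdisj fun h ↦ hxv h.symm) hx (hroot x)
      · exact (mem_branchOf_true (Z := Z) (x := x) (v := v)).symm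
    rw [hC] at hconn hadj
    exact ⟨Z, ⟨fun u v huv ↦ (hdisj huv).preimage _, hconn, hadj⟩⟩
  · rintro ⟨Z, hZ⟩
    exact ⟨branchOf Z, by simp, hZ.connected, pairwise_disjoint_branchOf hZ.pairwise_disjoint,
      hZ.exists_adj⟩

def trivialBranches (Z : α → Set α) : Set α := {v | Z v = ∅}

namespace IsMprimeModel

variable {H : SimpleGraph α} {Z : α → Set α} {s v w x y z : α}

lemma adj_cases (hZ : IsMprimeModel H Z) {u : α} (huv : H.Adj u v) :
    (∃ y ∈ Z v, H.Adj u y) ∨ (∃ x ∈ Z u, H.Adj x v) ∨ ∃ x ∈ Z u, ∃ y ∈ Z v, H.Adj x y :=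
  exists_mprime_adj_branchOf_iff.1 (hZ.exists_adj _ _ huv)

lemma exists_mem_adj_of_nonempty (hZ : IsMprimeModel H Z) (hv : (Z v).Nonempty) :
    ∃ y ∈ Z v, H.Adj v y := by
  obtain ⟨y, hy⟩ := hv
  have : Nontrivial (branchOf Z v) :=
    ⟨⟨⟨(v, false), by simp⟩, ⟨(y, true), by simpa⟩, by simp⟩⟩
  obtain ⟨⟨⟨x, _ | _⟩, hx⟩, hadj, hb⟩ :=
    (hZ.connected v).preconnected.exists_adj_of_nontrivial ⟨(v, false), by simp⟩
  · simp at hb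
  · exact ⟨x, mem_branchOf_true.1 hx, hadj⟩

lemma exists_mem_adj_of_adj_of_mem_trivialBranches (hZ : IsMprimeModel H Z)
    (hs : s ∈ trivialBranches Z) (hsw : H.Adj s w) : ∃ y ∈ Z w, H.Adj s y := by
  rcases hZ.adj_cases hsw with h | ⟨x, hx, -⟩ | ⟨x, hx, -⟩
  · exact h
  all_goals simp [hs.out] at hx

lemma isStableSet (hZ : IsMprimeModel H Z) : IsStableSet H (trivialBranches Z) := by
  intro s hs w hw hsw
  obtain ⟨y, hy, -⟩ := hZ.exists_mem_adj_of_adj_of_mem_trivialBranches hs hsw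
  simp [hw.out] at hy

variable [Finite α]

lemma neighbors_inter_eq_singleton (hZ : IsMprimeModel H Z)
    (hy : y ∈ setNeighbors H (trivialBranches Z)) (hyv : y ∈ Z v) :
    v ∈ setNeighbors H (trivialBranches Z) ∧ setNeighbors H (trivialBranches Z) ∩ Z v = {y} := by
  refine inter_eq_singleton_of_pairwise_disjoint hZ.pairwise_disjoint ?_ hy hyv
  rintro w ⟨s, hs, hsw⟩
  obtain ⟨y, hy, hsy⟩ := hZ.exists_mem_adj_of_adj_of_mem_trivialBranches hs hsw
  exact ⟨y, ⟨s, hs, hsy⟩, hy⟩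

lemma mem_rest_of_adj (hZ : IsMprimeModel H Z)
    (hz : z ∈ (trivialBranches Z ∪ setNeighbors H (trivialBranches Z))ᶜ) (hy : y ∈ Z z)
    (hx : x ∉ setNeighbors H (trivialBranches Z)) (hxy : H.Adj x y) :
    y ∈ (trivialBranches Z ∪ setNeighbors H (trivialBranches Z))ᶜ := by
  rintro (hyS | hyN)
  · exact hx ⟨y, hyS, hxy.symm⟩
  · exact hz (.inr (hZ.neighbors_inter_eq_singleton hyN hy).1)

lemma exists_mem_rest_adj (hZ : IsMprimeModel H Z)
    (hz : z ∈ (trivialBranches Z ∪ setNeighbors H (trivialBranches Z))ᶜ) :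
    ∃ y ∈ Z z, y ∈ (trivialBranches Z ∪ setNeighbors H (trivialBranches Z))ᶜ ∧ H.Adj z y := by
  obtain ⟨y, hy, hzy⟩ :=
    hZ.exists_mem_adj_of_nonempty (nonempty_iff_ne_empty.2 fun h ↦ hz (.inl h))
  exact ⟨y, hy, hZ.mem_rest_of_adj hz hy (fun h ↦ hz (.inr h)) hzy, hzy⟩

lemma rest_inter_eq_singleton (hZ : IsMprimeModel H Z)
    (hy : y ∈ (trivialBranches Z ∪ setNeighbors H (trivialBranches Z))ᶜ) (hyv : y ∈ Z v) :
    v ∈ (trivialBranches Z ∪ setNeighbors H (trivialBranches Z))ᶜ ∧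
      (trivialBranches Z ∪ setNeighbors H (trivialBranches Z))ᶜ ∩ Z v = {y} := by
  refine inter_eq_singleton_of_pairwise_disjoint hZ.pairwise_disjoint (fun z hz ↦ ?_) hy hyv
  obtain ⟨y, hy, hyT, -⟩ := hZ.exists_mem_rest_adj hz
  exact ⟨y, hyT, hy⟩

lemma exists_mem_trivialBranches_adj (hZ : IsMprimeModel H Z) (hH : H.CliqueFree 3)
    (hw : w ∈ setNeighbors H (trivialBranches Z)) :
    ∃ c ∈ Z w, c ∈ trivialBranches Z ∧ H.Adj c w := by
  obtain ⟨s, hs, hsw⟩ := hw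
  obtain ⟨y, hy, hsy⟩ := hZ.exists_mem_adj_of_adj_of_mem_trivialBranches hs hsw
  obtain ⟨c, hc, hwc⟩ := hZ.exists_mem_adj_of_nonempty ⟨y, hy⟩
  refine ⟨c, hc, by_contra fun hcS ↦ ?_, hwc.symm⟩
  by_cases hcN : c ∈ setNeighbors H (trivialBranches Z)
  · obtain rfl : c = y := (hZ.neighbors_inter_eq_singleton ⟨s, hs, hsy⟩ hy).2.subset ⟨hcN, hc⟩
    exact hH.not_adj_of_adj_of_adj hsw hsy hwc
  · refine (hZ.rest_inter_eq_singleton ?_ hc).1 (.inr ⟨s, hs, hsw⟩)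
    rintro (h | h) <;> contradiction

lemma exists_matching (hZ : IsMprimeModel H Z) (hH : H.CliqueFree 3) :
    ∃ g : α → α, InjOn g (setNeighbors H (trivialBranches Z)) ∧
      ∀ w ∈ setNeighbors H (trivialBranches Z), g w ∈ trivialBranches Z ∧ H.Adj (g w) w := by
  choose! g hgZ hgS hgw using fun w (hw : w ∈ _) ↦ hZ.exists_mem_trivialBranches_adj hH hw
  exact ⟨g, fun a ha b hb hab ↦ hZ.pairwise_disjoint.eq_of_mem_of_mem (hgZ a ha) (hab ▸ hgZ b hb),
    fun w hw ↦ ⟨hgS w hw, hgw w hw⟩⟩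

lemma hasShiftAutomorphism (hZ : IsMprimeModel H Z) (hH : H.CliqueFree 3) :
    HasShiftAutomorphism
      (H.induce (trivialBranches Z ∪ setNeighbors H (trivialBranches Z))ᶜ) := by
  set T := (trivialBranches Z ∪ setNeighbors H (trivialBranches Z))ᶜ
  have : ∀ z : T, ∃ y : T, (y : α) ∈ Z z ∧ H.Adj z y := fun z ↦
    let ⟨y, hy, hyT, hzy⟩ := hZ.exists_mem_rest_adj z.2
    ⟨⟨y, hyT⟩, hy, hzy⟩
  choose π hπZ hπadj using this
  have hπ : Injective π := fun a b hab ↦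
    Subtype.ext (hZ.pairwise_disjoint.eq_of_mem_of_mem (hπZ a) (hab ▸ hπZ b))
  have eq_π : ∀ z : T, ∀ y ∈ Z z, y ∈ T → y = π z := fun z y hy hyT ↦
    (hZ.rest_inter_eq_singleton (π z).2 (hπZ z)).2.subset ⟨hyT, hy⟩
  refine ⟨Equiv.ofBijective π (Finite.injective_iff_bijective.1 hπ), fun a b hab ↦ ?_, hπadj⟩
  change H.Adj a b at hab
  change H.Adj (π a) (π b)
  have hN : ∀ z : T, (z : α) ∉ setNeighbors H (trivialBranches Z) := fun z h ↦ z.2 (.inr h)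
  rcases hZ.adj_cases hab with ⟨y, hy, hay⟩ | ⟨x, hx, hxb⟩ | ⟨x, hx, y, hy, hxy⟩
  · rw [eq_π b y hy (hZ.mem_rest_of_adj b.2 hy (hN a) hay)] at hay
    exact absurd hay (hH.not_adj_of_adj_of_adj hab.symm (hπadj b))
  · rw [eq_π a x hx (hZ.mem_rest_of_adj a.2 hx (hN b) hxb.symm)] at hxb
    exact absurd hxb.symm (hH.not_adj_of_adj_of_adj hab (hπadj a))
  · have hyN : y ∉ setNeighbors H (trivialBranches Z) :=
      fun h ↦ hN b (hZ.neighbors_inter_eq_singleton h hy).1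
    have hxT := hZ.mem_rest_of_adj a.2 hx hyN hxy.symm
    have hyT := hZ.mem_rest_of_adj b.2 hy (fun h ↦ hxT (.inr h)) hxy
    rwa [eq_π a x hx hxT, eq_π b y hy hyT] at hxy

end IsMprimeModel

def contractionModel (H : SimpleGraph α) (S : Set α) (g p : α → α) (v : α) : Set α :=
  {x | v ∈ setNeighbors H S ∧ (x = v ∨ x = g v) ∨ v ∉ S ∪ setNeighbors H S ∧ x = p v}

section contractionModel

variable {H : SimpleGraph α} {S : Set α} {g p : α → α}

lemma IsStableSet.notMem_setNeighbors (hS : IsStableSet H S) {v : α} (hv : v ∈ S) :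
    v ∉ setNeighbors H S :=
  fun ⟨s, hs, hsv⟩ ↦ hS s hs v hv hsv

lemma mem_contractionModel_cases (hS : IsStableSet H S)
    (hgN : ∀ w ∈ setNeighbors H S, g w ∈ S ∧ H.Adj (g w) w)
    (hpT : MapsTo p (S ∪ setNeighbors H S)ᶜ (S ∪ setNeighbors H S)ᶜ) {v x : α}
    (hx : x ∈ contractionModel H S g p v) :
    (x ∈ setNeighbors H S → x = v) ∧ (x ∈ S → v ∈ setNeighbors H S ∧ x = g v) ∧
      (x ∈ (S ∪ setNeighbors H S)ᶜ → v ∈ (S ∪ setNeighbors H S)ᶜ ∧ x = p v) := by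
  rcases hx with ⟨hv, rfl | rfl⟩ | ⟨hv, rfl⟩
  · exact ⟨fun _ ↦ rfl, fun hxS ↦ absurd hv (hS.notMem_setNeighbors hxS),
      fun hxT ↦ absurd (.inr hv) hxT⟩
  · exact ⟨fun hxN ↦ absurd hxN (hS.notMem_setNeighbors (hgN v hv).1),
      fun _ ↦ ⟨hv, rfl⟩, fun hxT ↦ absurd (.inl (hgN v hv).1) hxT⟩
  · exact ⟨fun hxN ↦ absurd (.inr hxN) (hpT hv), fun hxS ↦ absurd (.inl hxS) (hpT hv),
      fun _ ↦ ⟨hv, rfl⟩⟩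

lemma pairwise_disjoint_contractionModel (hS : IsStableSet H S)
    (hg : InjOn g (setNeighbors H S)) (hgN : ∀ w ∈ setNeighbors H S, g w ∈ S ∧ H.Adj (g w) w)
    (hpT : MapsTo p (S ∪ setNeighbors H S)ᶜ (S ∪ setNeighbors H S)ᶜ)
    (hp : InjOn p (S ∪ setNeighbors H S)ᶜ) :
    Pairwise (Disjoint on contractionModel H S g p) := by
  intro u v huv
  refine Set.disjoint_left.2 fun x hxu hxv ↦ huv ?_
  have hu := mem_contractionModel_cases hS hgN hpT hxu
  have hv := mem_contractionModel_cases hS hgN hpT hxv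
  by_cases hxS : x ∈ S
  · exact hg (hu.2.1 hxS).1 (hv.2.1 hxS).1 ((hu.2.1 hxS).2.symm.trans (hv.2.1 hxS).2)
  by_cases hxN : x ∈ setNeighbors H S
  · exact (hu.1 hxN).symm.trans (hv.1 hxN)
  · have hxT : x ∈ (S ∪ setNeighbors H S)ᶜ := by rintro (h | h) <;> contradiction
    exact hp (hu.2.2 hxT).1 (hv.2.2 hxT).1 ((hu.2.2 hxT).2.symm.trans (hv.2.2 hxT).2)

lemma connected_branchOf_contractionModel
    (hgN : ∀ w ∈ setNeighbors H S, g w ∈ S ∧ H.Adj (g w) w)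
    (hpadj : ∀ v ∈ (S ∪ setNeighbors H S)ᶜ, H.Adj v (p v)) (v : α) :
    ((Mprime H).induce (branchOf (contractionModel H S g p) v)).Connected := by
  by_cases hvN : v ∈ setNeighbors H S
  · refine induce_connected_of_forall_adj (c := (g v, true)) (.inr ⟨rfl, .inl ⟨hvN, .inr rfl⟩⟩) ?_
    rintro ⟨x, b⟩ (h | ⟨rfl, ⟨-, hx | hx⟩ | ⟨hvT, -⟩⟩)
    · rw [h]
      exact .inr ⟨(hgN v hvN).2, .inl rfl⟩
    · rw [show x = v from hx]
      exact .inr ⟨(hgN v hvN).2, .inl rfl⟩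
    · rw [show x = g v from hx]
      exact .inl rfl
    · exact absurd (.inr hvN) hvT
  · refine induce_connected_of_forall_adj (c := (v, false)) (.inl rfl) ?_
    rintro ⟨x, b⟩ (h | ⟨rfl, ⟨hvN', -⟩ | ⟨hvT, rfl⟩⟩)
    · exact .inl h
    · exact absurd hvN' hvN
    · exact .inr ⟨hpadj v hvT, .inr rfl⟩

lemma adj_cases_contractionModel
    (hphom : ∀ u ∈ (S ∪ setNeighbors H S)ᶜ, ∀ v ∈ (S ∪ setNeighbors H S)ᶜ,
      H.Adj u v → H.Adj (p u) (p v)) {u v : α} (huv : H.Adj u v) :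
    (∃ y ∈ contractionModel H S g p v, H.Adj u y) ∨
      (∃ x ∈ contractionModel H S g p u, H.Adj x v) ∨
      ∃ x ∈ contractionModel H S g p u, ∃ y ∈ contractionModel H S g p v, H.Adj x y := by
  by_cases hvN : v ∈ setNeighbors H S
  · exact .inl ⟨v, .inl ⟨hvN, .inl rfl⟩, huv⟩
  by_cases huN : u ∈ setNeighbors H S
  · exact .inr (.inl ⟨u, .inl ⟨huN, .inl rfl⟩, huv⟩)
  have huT : u ∈ (S ∪ setNeighbors H S)ᶜ := by
    rintro (huS | huN')
    exacts [hvN ⟨u, huS, huv⟩, huN huN']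
  have hvT : v ∈ (S ∪ setNeighbors H S)ᶜ := by
    rintro (hvS | hvN')
    exacts [huN ⟨v, hvS, huv.symm⟩, hvN hvN']
  exact .inr (.inr ⟨p u, .inr ⟨huT, rfl⟩, p v, .inr ⟨hvT, rfl⟩, hphom u huT v hvT huv⟩)

lemma isMprimeModel_contractionModel (hS : IsStableSet H S)
    (hg : InjOn g (setNeighbors H S)) (hgN : ∀ w ∈ setNeighbors H S, g w ∈ S ∧ H.Adj (g w) w)
    (hpT : MapsTo p (S ∪ setNeighbors H S)ᶜ (S ∪ setNeighbors H S)ᶜ)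
    (hp : InjOn p (S ∪ setNeighbors H S)ᶜ) (hpadj : ∀ v ∈ (S ∪ setNeighbors H S)ᶜ, H.Adj v (p v))
    (hphom : ∀ u ∈ (S ∪ setNeighbors H S)ᶜ, ∀ v ∈ (S ∪ setNeighbors H S)ᶜ,
      H.Adj u v → H.Adj (p u) (p v)) :
    IsMprimeModel H (contractionModel H S g p) where
  pairwise_disjoint := pairwise_disjoint_contractionModel hS hg hgN hpT hp
  connected := connected_branchOf_contractionModel hgN hpadj
  exists_adj _ _ huv := exists_mprime_adj_branchOf_iff.2 (adj_cases_contractionModel hphom huv)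

end contractionModel

/-- A triangle-free graph `H` is M'-contractible iff `H` has a stable
set inducing an M'-contraction. -/
theorem trianglefree_mprime_contractible_iff {α : Type} [Fintype α]
    (H : SimpleGraph α) (hH : H.CliqueFree 3) :
    MprimeContractible H ↔ ∃ S : Set α, IsStableSet H S ∧ InducesMprimeContraction H S := by
  rw [mprimeContractible_iff]
  constructor
  · rintro ⟨Z, hZ⟩
    exact ⟨trivialBranches Z, hZ.isStableSet, hZ.exists_matching hH, hZ.hasShiftAutomorphism hH⟩
  · rintro ⟨S, hS, ⟨g, hg, hgN⟩, hshift⟩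
    obtain ⟨p, hpT, hp, hpadj, hphom⟩ := hshift.exists_shift_of_induce
    exact ⟨_, isMprimeModel_contractionModel hS hg hgN hpT hp hpadj hphom⟩
end

section
/- If a graph H has a stable set that induces an M'-contraction, then H is M'-contractible. -/
open SimpleGraph

/-! Every vertex `v` keeps its own first copy `(v, false)`. A vertex `w ∈ N(S)` also takes
its second copy and the second copy of its matched partner `g w ∈ S`, a vertex `v` outside
`S ∪ N(S)` takes the second copy of its image `π v` under the shift automorphism, and a vertex
of `S` takes nothing more. Each branch set is a star around a second copy, the sets are disjoint
because `g` and `π` are injective, and every edge of `H` is realised: an edge meeting `S` or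
`N(S)` has an end in `N(S)`, whose second copy sees the first copy of the other end, and an edge
`uv` outside `S ∪ N(S)` is realised by `(π u, true) (π v, true)`. -/

lemma SimpleGraph.induce_connected_of_forall_adj_s11 {β : Type} {G : SimpleGraph β} {s : Set β}
    {c : β} (hc : c ∈ s) (h : ∀ x ∈ s, x ≠ c → G.Adj c x) : (G.induce s).Connected := by
  refine (connected_iff_exists_forall_reachable _).2 ⟨⟨c, hc⟩, fun ⟨x, hx⟩ => ?_⟩
  by_cases hxc : x = c
  · subst hxc; rfl
  · exact Adj.reachable (h x hx hxc)

lemma IsStableSet.disjoint_setNeighbors {α : Type} {H : SimpleGraph α} {S : Set α}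
    (hS : IsStableSet H S) : Disjoint S (setNeighbors H S) :=
  Set.disjoint_left.2 fun v hv ⟨u, hu, huv⟩ => hS u hu v hv huv

lemma HasShiftAutomorphism.exists_shift_on {α : Type} {H : SimpleGraph α} {s : Set α}
    (h : HasShiftAutomorphism (H.induce s)) :
    ∃ p : α → α, Set.MapsTo p s s ∧ Set.InjOn p s ∧ (∀ v ∈ s, H.Adj v (p v)) ∧
      ∀ u ∈ s, ∀ v ∈ s, H.Adj u v → H.Adj (p u) (p v) := by
  classical
  obtain ⟨π, hπ_adj, hπ_shift⟩ := h
  let p : α → α := fun v => if hv : v ∈ s then π ⟨v, hv⟩ else v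
  have hp : ∀ v (hv : v ∈ s), p v = π ⟨v, hv⟩ := fun v hv => dif_pos hv
  refine ⟨p, fun v hv => ?_, fun u hu v hv huv => ?_, fun v hv => ?_,
    fun u hu v hv huv => ?_⟩
  · rw [hp v hv]; exact (π _).2
  · rw [hp u hu, hp v hv] at huv
    exact congrArg Subtype.val (π.injective (Subtype.ext huv))
  · rw [hp v hv]; exact hπ_shift ⟨v, hv⟩
  · rw [hp u hu, hp v hv]; exact hπ_adj ⟨u, hu⟩ ⟨v, hv⟩ huv

structure MprimeContractionData {α : Type} (H : SimpleGraph α) (S : Set α) where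
  partner : α → α
  partner_injOn : Set.InjOn partner (setNeighbors H S)
  partner_mem : ∀ w ∈ setNeighbors H S, partner w ∈ S
  partner_adj : ∀ w ∈ setNeighbors H S, H.Adj (partner w) w
  shift : α → α
  shift_mapsTo : Set.MapsTo shift (S ∪ setNeighbors H S)ᶜ (S ∪ setNeighbors H S)ᶜ
  shift_injOn : Set.InjOn shift (S ∪ setNeighbors H S)ᶜ
  adj_shift : ∀ v ∈ (S ∪ setNeighbors H S)ᶜ, H.Adj v (shift v)
  shift_adj_shift : ∀ u ∈ (S ∪ setNeighbors H S)ᶜ, ∀ v ∈ (S ∪ setNeighbors H S)ᶜ,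
    H.Adj u v → H.Adj (shift u) (shift v)

lemma InducesMprimeContraction.nonempty_data {α : Type} {H : SimpleGraph α} {S : Set α}
    (h : InducesMprimeContraction H S) : Nonempty (MprimeContractionData H S) := by
  obtain ⟨⟨g, hg_inj, hg⟩, hshift⟩ := h
  obtain ⟨p, hp_maps, hp_inj, hp_adj, hp_pres⟩ := hshift.exists_shift_on
  exact ⟨⟨g, hg_inj, fun w hw => (hg w hw).1, fun w hw => (hg w hw).2,
    p, hp_maps, hp_inj, hp_adj, hp_pres⟩⟩

open Function

namespace MprimeContractionData

variable {α : Type} {H : SimpleGraph α} {S : Set α} (D : MprimeContractionData H S)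

noncomputable def secondLayer (v : α) : Set α := by
  classical exact
    if v ∈ S then ∅ else if v ∈ setNeighbors H S then {v, D.partner v} else {D.shift v}

def branchSet (v : α) : Set (α × Bool) :=
  insert (v, false) (D.secondLayer v ×ˢ {true})

lemma mem_secondLayer {v x : α} (hx : x ∈ D.secondLayer v) :
    (x ∈ setNeighbors H S ∧ x = v) ∨ (x ∈ S ∧ v ∈ setNeighbors H S ∧ x = D.partner v) ∨
      (x ∈ (S ∪ setNeighbors H S)ᶜ ∧ v ∈ (S ∪ setNeighbors H S)ᶜ ∧ x = D.shift v) := by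
  classical
  unfold secondLayer at hx
  split_ifs at hx with hvS hvN
  · exact hx.elim
  · rcases hx with rfl | rfl
    · exact Or.inl ⟨hvN, rfl⟩
    · exact Or.inr (Or.inl ⟨D.partner_mem v hvN, hvN, rfl⟩)
  · have hv : v ∈ (S ∪ setNeighbors H S)ᶜ := by simp [hvS, hvN]
    rw [Set.mem_singleton_iff.1 hx]
    exact Or.inr (Or.inr ⟨D.shift_mapsTo hv, hv, rfl⟩)

lemma secondLayer_pairwise_disjoint (hS : IsStableSet H S) :
    Pairwise (Disjoint on D.secondLayer) := by
  have hSN := hS.disjoint_setNeighbors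
  intro u v huv
  refine Set.disjoint_left.2 fun x hxu hxv => huv ?_
  rcases D.mem_secondLayer hxu with ⟨hxN, rfl⟩ | ⟨hxS, huN, rfl⟩ | ⟨hxR, huR, rfl⟩ <;>
    rcases D.mem_secondLayer hxv with ⟨hxN', hx⟩ | ⟨hxS', hvN, hx⟩ | ⟨hxR', hvR, hx⟩
  · exact hx
  · exact (hSN.ne_of_mem hxS' hxN rfl).elim
  · exact (hxR' (Or.inr hxN)).elim
  · exact (hSN.ne_of_mem hxS hxN' rfl).elim
  · exact D.partner_injOn huN hvN hx
  · exact (hxR' (Or.inl hxS)).elim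
  · exact (hxR (Or.inr hxN')).elim
  · exact (hxR (Or.inl hxS')).elim
  · exact D.shift_injOn huR hvR hx

lemma branchSet_pairwise_disjoint (hS : IsStableSet H S) :
    Pairwise (Disjoint on D.branchSet) := by
  intro u v huv
  refine Set.disjoint_left.2 fun ⟨x, b⟩ hxu hxv => ?_
  simp only [branchSet, Set.mem_insert_iff, Set.mem_prod, Set.mem_singleton_iff,
    Prod.mk.injEq] at hxu hxv
  rcases hxu with ⟨rfl, rfl⟩ | ⟨hxu, rfl⟩
  · rcases hxv with ⟨rfl, -⟩ | ⟨-, hb⟩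
    · exact huv rfl
    · exact Bool.false_ne_true hb
  · rcases hxv with ⟨-, hb⟩ | ⟨hxv, -⟩
    · exact Bool.false_ne_true hb.symm
    · exact Set.disjoint_left.1 (D.secondLayer_pairwise_disjoint hS huv) hxu hxv

lemma branchSet_connected (v : α) : ((Mprime H).induce (D.branchSet v)).Connected := by
  by_cases hvS : v ∈ S
  · refine induce_connected_of_forall_adj_s11 (Set.mem_insert _ _) fun x hx hxv => ?_
    simp [branchSet, secondLayer, hvS, hxv] at hx
  by_cases hvN : v ∈ setNeighbors H S
  · refine induce_connected_of_forall_adj_s11 (c := (D.partner v, true))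
      (by simp [branchSet, secondLayer, hvS, hvN]) fun ⟨a, b⟩ hx hxc => ?_
    have hadj := D.partner_adj v hvN
    simp only [branchSet, secondLayer, hvS, hvN, if_false, if_true, Set.mem_insert_iff,
      Set.mem_prod, Set.mem_singleton_iff, Prod.mk.injEq] at hx
    rcases hx with ⟨rfl, rfl⟩ | ⟨rfl | rfl, rfl⟩
    · exact ⟨hadj, Or.inl rfl⟩
    · exact ⟨hadj, Or.inl rfl⟩
    · exact (hxc rfl).elim
  · have hvR : v ∈ (S ∪ setNeighbors H S)ᶜ := by simp [hvS, hvN]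
    refine induce_connected_of_forall_adj_s11 (c := (D.shift v, true))
      (by simp [branchSet, secondLayer, hvS, hvN]) fun x hx hxc => ?_
    simp only [branchSet, secondLayer, hvS, hvN, if_false, Set.mem_insert_iff,
      Set.mem_prod, Set.mem_singleton_iff] at hx
    rcases hx with rfl | ⟨hx1, hx2⟩
    · exact ⟨(D.adj_shift v hvR).symm, Or.inl rfl⟩
    · exact (hxc (Prod.ext hx1 hx2)).elim

lemma exists_adj_branchSet (hS : IsStableSet H S) {u v : α} (huv : H.Adj u v) :
    ∃ x ∈ D.branchSet u, ∃ y ∈ D.branchSet v, (Mprime H).Adj x y := by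
  have h_nbr : ∀ {u v}, H.Adj u v → v ∈ setNeighbors H S →
      ∃ x ∈ D.branchSet u, ∃ y ∈ D.branchSet v, (Mprime H).Adj x y := fun {u v} huv hvN =>
    ⟨(u, false), Set.mem_insert _ _, (v, true), by
      simp [branchSet, secondLayer, hvN, hS.disjoint_setNeighbors.notMem_of_mem_right hvN],
      huv, Or.inr rfl⟩
  by_cases hvN : v ∈ setNeighbors H S
  · exact h_nbr huv hvN
  by_cases huN : u ∈ setNeighbors H S
  · obtain ⟨x, hx, y, hy, hxy⟩ := h_nbr huv.symm huN
    exact ⟨y, hy, x, hx, hxy.symm⟩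
  have huS : u ∉ S := fun huS => hvN ⟨u, huS, huv⟩
  have hvS : v ∉ S := fun hvS => huN ⟨v, hvS, huv.symm⟩
  have huR : u ∈ (S ∪ setNeighbors H S)ᶜ := by simp [huS, huN]
  have hvR : v ∈ (S ∪ setNeighbors H S)ᶜ := by simp [hvS, hvN]
  exact ⟨(D.shift u, true), by simp [branchSet, secondLayer, huS, huN],
    (D.shift v, true), by simp [branchSet, secondLayer, hvS, hvN],
    D.shift_adj_shift u huR v hvR huv, Or.inl rfl⟩

end MprimeContractionData

theorem MprimeContractionData.mprimeContractible {α : Type} {H : SimpleGraph α} {S : Set α}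
    (D : MprimeContractionData H S) (hS : IsStableSet H S) : MprimeContractible H :=
  ⟨D.branchSet, fun _ => Set.mem_insert _ _, D.branchSet_connected,
    D.branchSet_pairwise_disjoint hS, fun _ _ => D.exists_adj_branchSet hS⟩

theorem stable_set_induces_mprime_contractible_general {α : Type}
    (H : SimpleGraph α) (S : Set α) (hS : IsStableSet H S)
    (hind : InducesMprimeContraction H S) : MprimeContractible H := by
  obtain ⟨D⟩ := hind.nonempty_data
  exact D.mprimeContractible hS

/-- If `H` has a stable set inducing an M'-contraction, then `H` is
M'-contractible. -/
theorem stable_set_induces_mprime_contractible {α : Type} [Fintype α]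
    (H : SimpleGraph α) (S : Set α) (hS : IsStableSet H S)
    (hind : InducesMprimeContraction H S) : MprimeContractible H :=
  stable_set_induces_mprime_contractible_general H S hS hind
end

section
/- Every subgraph of a rooted-contractible graph is rooted-contractible. -/
open SimpleGraph

/-!
Given an `H'`-scheme in `G`, add the vertices of `H` outside `H'` to `G` as isolated vertices,
and join the roots of every edge of `H` that is not an edge of `H'` by a new edge. The paths of
the scheme together with these single edges form an `H`-scheme, so the enlarged graph has a
rooted `H`-minor. Each branch set contains exactly one root, so no new edge lies inside a branch
set or joins the branch sets of an edge of `H'`, and the connected branch set of a root of `G`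
contains no isolated vertex; hence the branch sets of the vertices of `H'` form a rooted
`H'`-minor of `G`.
-/

namespace SimpleGraph

variable {V W : Type*} {G N : SimpleGraph V}

lemma induce_sup_eq_of_forall_not_adj {s : Set V} (h : ∀ x ∈ s, ∀ y ∈ s, ¬ N.Adj x y) :
    (G ⊔ N).induce s = G.induce s := by
  ext x y
  simp [h x x.2 y y.2]

lemma connected_induce_preimage_of_map (φ : V ↪ W) {C : Set W}
    (hC : ((G.map φ).induce C).Connected) {v : V} (hv : φ v ∈ C) :
    (G.induce (φ ⁻¹' C)).Connected := by
  have hsub : C ⊆ Set.range φ := by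
    intro c hc
    by_cases hcv : c = φ v
    · exact ⟨v, hcv.symm⟩
    obtain ⟨p⟩ := hC.preconnected ⟨c, hc⟩ ⟨φ v, hv⟩
    obtain ⟨-, a, -, -, rfl, -⟩ :=
      Walk.adj_snd (p := p) (Walk.not_nil_of_ne (by simpa using hcv))
    exact ⟨a, rfl⟩
  obtain ⟨S, rfl⟩ : ∃ S, C = φ '' S := ⟨_, (Set.image_preimage_eq_of_subset hsub).symm⟩
  rw [Set.preimage_image_eq _ φ.injective]
  let e : G.induce S ≃g (G.map φ).induce (φ '' S) :=
    { Equiv.Set.image φ S φ.injective with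
      map_rel_iff' := by simp }
  exact e.connected_iff.mpr hC

end SimpleGraph

namespace Function.Embedding

variable {α α' β : Type*} (ι : α' ↪ α) (f : α' ↪ β)

noncomputable def sumExtend : α ↪ β ⊕ α where
  toFun := Function.extend ι (Sum.inl ∘ f) Sum.inr
  inj' a b hab := by
    rcases em (a ∈ Set.range ι) with ⟨a', rfl⟩ | ha <;>
      rcases em (b ∈ Set.range ι) with ⟨b', rfl⟩ | hb <;>
      simp_all [ι.injective.extend_apply, Function.extend_apply', Set.mem_range]

variable {ι f}

@[simp]
lemma sumExtend_apply (a' : α') : ι.sumExtend f (ι a') = .inl (f a') :=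
  ι.injective.extend_apply _ _ a'

lemma sumExtend_eq_inl {a : α} {y : β} (h : ι.sumExtend f a = .inl y) :
    ∃ a', ι a' = a ∧ f a' = y := by
  by_cases ha : ∃ a', ι a' = a
  · obtain ⟨a', rfl⟩ := ha
    exact ⟨a', rfl, by simpa using h⟩
  · have : ι.sumExtend f a = .inr a := Function.extend_apply' _ _ _ ha
    simp [this] at h

lemma sumExtend_of_mem_range {a : α} (ha : a ∈ Set.range ι) :
    ι.sumExtend f a = .inl (f (Set.rangeSplitting ι ⟨a, ha⟩)) := by
  have := ι.sumExtend_apply (f := f) (Set.rangeSplitting ι ⟨a, ha⟩)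
  rwa [Set.apply_rangeSplitting ι] at this

end Function.Embedding

section Mono

variable {α β : Type} {H K : SimpleGraph α} {G : SimpleGraph β} {f : α ↪ β}

lemma eq_of_root_mem_branchSet {f : α ↪ β} {C : α → Set β} (hroot : ∀ v, f v ∈ C v)
    (hdisj : Pairwise fun u v => Disjoint (C u) (C v)) {a v : α} (h : f a ∈ C v) : a = v := by
  by_contra hne
  exact Set.disjoint_left.mp (hdisj hne) (hroot a) h

namespace HScheme

lemma adj_sup_map_sdiff {u v : α} (h : H.Adj u v) (hK : ¬ K.Adj u v) :
    (G ⊔ (H \ K).map f).Adj (f u) (f v) :=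
  Or.inr (map_adj_apply.mpr ⟨h, hK⟩)

open scoped Classical in
noncomputable def supMapSdiffPath (S : HScheme K G f) (H : SimpleGraph α) (u v : α)
    (h : H.Adj u v) : (G ⊔ (H \ K).map f).Walk (f u) (f v) :=
  if hK : K.Adj u v then (S.path u v hK).mapLe le_sup_left else (adj_sup_map_sdiff h hK).toWalk

variable (S : HScheme K G f) {u v : α} (h : H.Adj u v)

lemma supMapSdiffPath_of_adj (hK : K.Adj u v) :
    S.supMapSdiffPath H u v h = (S.path u v hK).mapLe le_sup_left := dif_pos hK

lemma supMapSdiffPath_of_not_adj (hK : ¬ K.Adj u v) :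
    S.supMapSdiffPath H u v h = (adj_sup_map_sdiff h hK).toWalk := dif_neg hK

lemma supMapSdiffPath_symm :
    S.supMapSdiffPath H v u h.symm = (S.supMapSdiffPath H u v h).reverse := by
  by_cases hK : K.Adj u v
  · rw [supMapSdiffPath_of_adj _ _ hK, supMapSdiffPath_of_adj _ _ hK.symm, Walk.reverse_mapLe,
      S.path_symm]
  · rw [supMapSdiffPath_of_not_adj _ _ hK, supMapSdiffPath_of_not_adj _ _ (mt K.adj_symm hK),
      Walk.reverse_toWalk]

lemma supMapSdiffPath_isPath : (S.supMapSdiffPath H u v h).IsPath := by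
  by_cases hK : K.Adj u v
  · rw [supMapSdiffPath_of_adj _ _ hK]
    exact (S.path_isPath u v hK).mapLe _
  · rw [supMapSdiffPath_of_not_adj _ _ hK]
    exact Walk.IsPath.of_adj _

lemma supMapSdiffPath_root_mem {w : α} (hw : f w ∈ (S.supMapSdiffPath H u v h).support) :
    w = u ∨ w = v := by
  by_cases hK : K.Adj u v
  · rw [supMapSdiffPath_of_adj _ _ hK, Walk.support_mapLe_eq_support] at hw
    exact S.root_mem u v hK w hw
  · rw [supMapSdiffPath_of_not_adj _ _ hK, Adj.support_toWalk] at hw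
    simpa [f.injective.eq_iff] using hw

lemma exists_mem_support_path_of_not_mem_range {x : β} (hx : x ∉ Set.range f)
    (hxP : x ∈ (S.supMapSdiffPath H u v h).support) :
    ∃ hK : K.Adj u v, x ∈ (S.path u v hK).support := by
  by_cases hK : K.Adj u v
  · rw [supMapSdiffPath_of_adj _ _ hK, Walk.support_mapLe_eq_support] at hxP
    exact ⟨hK, hxP⟩
  · rw [supMapSdiffPath_of_not_adj _ _ hK, Adj.support_toWalk] at hxP
    simp only [List.mem_cons, List.not_mem_nil, or_false] at hxP
    exact (hx (hxP.elim (⟨u, ·.symm⟩) (⟨v, ·.symm⟩))).elim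

noncomputable def supMapSdiff (H : SimpleGraph α) : HScheme H (G ⊔ (H \ K).map f) f where
  path := S.supMapSdiffPath H
  path_symm _ _ h := S.supMapSdiffPath_symm h
  path_isPath _ _ h := S.supMapSdiffPath_isPath h
  root_mem _ _ h _ hw := S.supMapSdiffPath_root_mem h hw
  common_endpoint x := by
    rintro ⟨u₀, v₀, h₀, hx₀⟩
    by_cases hx : x ∈ Set.range f
    · obtain ⟨w, rfl⟩ := hx
      exact ⟨w, fun u v h hw => S.supMapSdiffPath_root_mem h hw⟩
    · obtain ⟨hK₀, hxK₀⟩ := S.exists_mem_support_path_of_not_mem_range h₀ hx hx₀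
      obtain ⟨z, hz⟩ := S.common_endpoint x ⟨u₀, v₀, hK₀, hxK₀⟩
      refine ⟨z, fun u v h hxP => ?_⟩
      obtain ⟨hK, hxK⟩ := S.exists_mem_support_path_of_not_mem_range h hx hxP
      exact hz u v hK hxK

end HScheme

lemma RootedMinor.of_sup_map_sdiff (hKH : K ≤ H) (hM : RootedMinor H (G ⊔ (H \ K).map f) f) :
    RootedMinor K G f := by
  obtain ⟨C, hroot, hconn, hdisj, hedge⟩ := hM
  have hC {a v : α} : f a ∈ C v → a = v := eq_of_root_mem_branchSet hroot hdisj
  refine ⟨C, hroot, fun v => ?_, hdisj, fun u v huv => ?_⟩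
  · have hnew : ∀ x ∈ C v, ∀ y ∈ C v, ¬ ((H \ K).map f).Adj x y := by
      rintro _ hx _ hy ⟨-, a, b, hab, rfl, rfl⟩
      exact hab.1.ne ((hC hx).trans (hC hy).symm)
    rw [← induce_sup_eq_of_forall_not_adj hnew]
    exact hconn v
  · obtain ⟨x, hx, y, hy, hxy | ⟨-, a, b, hab, rfl, rfl⟩⟩ := hedge u v (hKH huv)
    · exact ⟨x, hx, y, hy, hxy⟩
    · obtain rfl := hC hx
      obtain rfl := hC hy
      exact (hab.2 huv).elim

theorem IsRootedContractible.mono (hKH : K ≤ H) (h : IsRootedContractible H) :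
    IsRootedContractible K := fun γ _ G f ⟨S⟩ =>
  (h γ (G ⊔ (H \ K).map f) f ⟨S.supMapSdiff H⟩).of_sup_map_sdiff hKH

end Mono

section OfMap

variable {α α' β : Type} {H' : SimpleGraph α'} {G : SimpleGraph β} {ι : α' ↪ α}
  {f : α' ↪ β}

namespace SimpleGraph

lemma mem_range_of_map_adj {a b : α} (h : (H'.map ι).Adj a b) : a ∈ Set.range ι := by
  obtain ⟨-, a', -, -, rfl, -⟩ := h
  exact ⟨a', rfl⟩

lemma adj_rangeSplitting_of_map_adj {a b : α} (h : (H'.map ι).Adj a b) :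
    H'.Adj (Set.rangeSplitting ι ⟨a, mem_range_of_map_adj h⟩)
      (Set.rangeSplitting ι ⟨b, mem_range_of_map_adj h.symm⟩) := by
  rw [← map_adj_apply (f := ι), Set.apply_rangeSplitting ι, Set.apply_rangeSplitting ι]
  exact h

end SimpleGraph

namespace HScheme

variable (S : HScheme H' G f) (ι)

noncomputable def mapPath {a b : α} (h : (H'.map ι).Adj a b) :
    (G.map Function.Embedding.inl).Walk (ι.sumExtend f a) (ι.sumExtend f b) :=
  ((S.path _ _ (adj_rangeSplitting_of_map_adj h)).map
      (Embedding.map Function.Embedding.inl G).toHom).copy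
    (u' := ι.sumExtend f a) (v' := ι.sumExtend f b)
    (by rw [ι.sumExtend_of_mem_range (mem_range_of_map_adj h)]; rfl)
    (by rw [ι.sumExtend_of_mem_range (mem_range_of_map_adj h.symm)]; rfl)

variable {ι} {a b : α} (h : (H'.map ι).Adj a b)

lemma support_mapPath : (S.mapPath ι h).support =
    (S.path _ _ (adj_rangeSplitting_of_map_adj h)).support.map Sum.inl := by
  rw [mapPath, Walk.support_copy, Walk.support_map]
  rfl

lemma mapPath_symm : S.mapPath ι h.symm = (S.mapPath ι h).reverse := by
  rw [mapPath, mapPath, Walk.reverse_copy, Walk.reverse_map, ← S.path_symm]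

lemma mapPath_isPath : (S.mapPath ι h).IsPath := by
  rw [mapPath, Walk.isPath_copy]
  exact Walk.IsPath.map Sum.inl_injective (S.path_isPath _ _ _)

lemma mem_support_mapPath {x : β ⊕ α} (hx : x ∈ (S.mapPath ι h).support) :
    ∃ y ∈ (S.path _ _ (adj_rangeSplitting_of_map_adj h)).support, x = .inl y := by
  rw [support_mapPath, List.mem_map] at hx
  obtain ⟨y, hy, rfl⟩ := hx
  exact ⟨y, hy, rfl⟩

lemma eq_or_eq_of_eq_rangeSplitting {z : α'}
    (hz : z = Set.rangeSplitting ι ⟨a, mem_range_of_map_adj h⟩ ∨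
      z = Set.rangeSplitting ι ⟨b, mem_range_of_map_adj h.symm⟩) :
    ι z = a ∨ ι z = b := by
  rcases hz with rfl | rfl <;> simp [Set.apply_rangeSplitting]

lemma mapPath_root_mem {w : α} (hw : ι.sumExtend f w ∈ (S.mapPath ι h).support) :
    w = a ∨ w = b := by
  obtain ⟨y, hy, hwy⟩ := S.mem_support_mapPath h hw
  obtain ⟨w', rfl, rfl⟩ := Function.Embedding.sumExtend_eq_inl hwy
  exact eq_or_eq_of_eq_rangeSplitting h (S.root_mem _ _ _ w' hy)

variable (ι) in
noncomputable def map :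
    HScheme (H'.map ι) (G.map Function.Embedding.inl) (ι.sumExtend f) where
  path _ _ h := S.mapPath ι h
  path_symm _ _ h := S.mapPath_symm h
  path_isPath _ _ h := S.mapPath_isPath h
  root_mem _ _ h _ hw := S.mapPath_root_mem h hw
  common_endpoint x := by
    rintro ⟨a₀, b₀, h₀, hx₀⟩
    obtain ⟨y, hy₀, rfl⟩ := S.mem_support_mapPath h₀ hx₀
    obtain ⟨z, hz⟩ := S.common_endpoint y ⟨_, _, _, hy₀⟩
    refine ⟨ι z, fun a b h hx => ?_⟩
    obtain ⟨y', hy, hyy'⟩ := S.mem_support_mapPath h hx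
    obtain rfl := Sum.inl_injective hyy'
    exact eq_or_eq_of_eq_rangeSplitting h (hz _ _ _ hy)

end HScheme

lemma RootedMinor.of_map_inl
    (hM : RootedMinor (H'.map ι) (G.map Function.Embedding.inl) (ι.sumExtend f)) :
    RootedMinor H' G f := by
  obtain ⟨C, hroot, hconn, hdisj, hedge⟩ := hM
  have hroot' (a' : α') : Sum.inl (f a') ∈ C (ι a') := by simpa using hroot (ι a')
  refine ⟨fun a' => Sum.inl ⁻¹' C (ι a'), hroot', fun a' => ?_, fun a' b' hne => ?_,
    fun a' b' h => ?_⟩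
  · exact connected_induce_preimage_of_map Function.Embedding.inl (hconn _) (hroot' a')
  · exact (hdisj (ι.injective.ne hne)).preimage _
  · obtain ⟨_, hx, _, hy, -, x, y, hxy, rfl, rfl⟩ := hedge _ _ (map_adj_apply.mpr h)
    exact ⟨x, hx, y, hy, hxy⟩

theorem IsRootedContractible.of_map [Fintype α] (ι : α' ↪ α)
    (h : IsRootedContractible (H'.map ι)) : IsRootedContractible H' := fun γ _ G f ⟨S⟩ =>
  (h (γ ⊕ α) (G.map Function.Embedding.inl) (ι.sumExtend f) ⟨S.map ι⟩).of_map_inl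

end OfMap

theorem subgraph_rooted_contractible_general {α α' : Type} [Fintype α]
    (H : SimpleGraph α) (H' : SimpleGraph α') (ι : α' ↪ α)
    (hι : ∀ a b, H'.Adj a b → H.Adj (ι a) (ι b))
    (h : IsRootedContractible H) : IsRootedContractible H' :=
  (h.mono ((map_le_iff_le_comap ι H' H).mpr hι)).of_map ι

/-- Every subgraph of a rooted-contractible graph is
rooted-contractible.  Here `H'` is (isomorphic to) a subgraph of `H`, witnessed by an
injection `ι` of the vertices carrying edges of `H'` to edges of `H`. -/
theorem subgraph_rooted_contractible {α α' : Type} [Fintype α] [Fintype α']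
    (H : SimpleGraph α) (H' : SimpleGraph α') (ι : α' ↪ α)
    (hι : ∀ a b, H'.Adj a b → H.Adj (ι a) (ι b))
    (h : IsRootedContractible H) : IsRootedContractible H' :=
  subgraph_rooted_contractible_general H H' ι hι h
end

section
/- Let H be a graph with a vertex u of degree 1. Then H is rooted-contractible if and only if H − u (the graph obtained from H by deleting u) is rooted-contractible. -/
open SimpleGraph

/-!
Let `w` be the neighbour of the leaf `u`. An `H`-scheme and an `(H - u)`-scheme differ only in
the path `P_{uw}`.

If `H` is rooted-contractible and `G` has an `(H - u)`-scheme, attach a new pendant vertex to the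
root of `w`: the new edge serves as `P_{uw}`, so the enlarged graph has an `H`-scheme, and the
branch sets of its rooted `H`-minor other than that of `u` avoid the new vertex and form a rooted
`(H - u)`-minor of `G`.

Conversely, given an `H`-scheme in `G`, delete the edges at the root of `u` and contract the rest
of `P_{uw}` onto the root of `w`. Only paths of edges at `w` can meet `P_{uw}`, and the contraction
merely shortens them, so this graph has an `(H - u)`-scheme. The branch sets of the resulting
rooted `(H - u)`-minor lift back along the contraction, the lift at `w` absorbing the rest of
`P_{uw}`, which is adjacent to the root of `u`; the root of `u` alone is then the last branch set.
-/

namespace SimpleGraph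

variable {V W : Type*}

theorem connected_induce_preimage_s17 {G : SimpleGraph V} {G' : SimpleGraph W} {π : V → W}
    {C : Set W} (hC : (G'.induce C).Connected)
    (hfib : ∀ c ∈ C, (G.induce (π ⁻¹' {c})).Connected)
    (hadj : ∀ a ∈ C, ∀ b ∈ C, G'.Adj a b → ∃ x y, G.Adj x y ∧ π x = a ∧ π y = b) :
    (G.induce (π ⁻¹' C)).Connected := by
  have reach_fiber : ∀ x y : π ⁻¹' C, π x = π y → (G.induce (π ⁻¹' C)).Reachable x y := by
    rintro ⟨x, hx⟩ ⟨y, hy⟩ hxy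
    have hsub : π ⁻¹' {π x} ⊆ π ⁻¹' C := fun z hz => by rwa [Set.mem_preimage, hz]
    exact ((hfib _ hx).preconnected ⟨x, rfl⟩ ⟨y, hxy.symm⟩).map (induceHomOfLE _ hsub).toHom
  have reach_of_walk : ∀ (c d : C) (_ : (G'.induce C).Walk c d) (x y : π ⁻¹' C),
      π x = c → π y = d → (G.induce (π ⁻¹' C)).Reachable x y := by
    intro c d p
    induction p with
    | nil => exact fun x y hx hy => reach_fiber x y (hx.trans hy.symm)
    | @cons c c' d hcc' _ ih =>
      intro x y hx hy
      obtain ⟨x', y', hx'y', hx', hy'⟩ := hadj c c.2 c' c'.2 hcc'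
      have hx'C : π x' ∈ C := hx' ▸ c.2
      have hy'C : π y' ∈ C := hy' ▸ c'.2
      exact (reach_fiber x ⟨x', hx'C⟩ (hx.trans hx'.symm)).trans
        ((Adj.reachable (G := G.induce _) (u := ⟨x', hx'C⟩) (v := ⟨y', hy'C⟩) hx'y').trans
          (ih ⟨y', hy'C⟩ y hy' hy))
  refine (connected_iff _).2 ⟨fun x y => ?_, ?_⟩
  · obtain ⟨p⟩ := hC.preconnected ⟨π x, x.2⟩ ⟨π y, y.2⟩
    exact reach_of_walk _ _ p x y rfl rfl
  · obtain ⟨⟨c, hc⟩⟩ := hC.nonempty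
    obtain ⟨⟨x, hx⟩⟩ := (hfib c hc).nonempty
    exact ⟨x, show π x ∈ C from hx ▸ hc⟩

theorem exists_adj_of_connected_induce {G : SimpleGraph V} {C : Set V}
    (hC : (G.induce C).Connected) {x y : V} (hx : x ∈ C) (hy : y ∈ C) (hxy : x ≠ y) :
    ∃ z, G.Adj x z := by
  obtain ⟨p⟩ := hC.preconnected ⟨x, hx⟩ ⟨y, hy⟩
  exact ⟨_, p.adj_snd (Walk.not_nil_of_ne fun h => hxy (congrArg Subtype.val h))⟩

theorem Walk.exists_isPath_support_subset_map {G : SimpleGraph V} {G' : SimpleGraph W}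
    {π : V → W} {a b : V} (p : G.Walk a b)
    (hπ : ∀ x ∈ p.support, ∀ y ∈ p.support, G.Adj x y → π x ≠ π y → G'.Adj (π x) (π y)) :
    ∃ q : G'.Walk (π a) (π b), q.IsPath ∧ q.support ⊆ p.support.map π := by
  suffices ∃ q : G'.Walk (π a) (π b), q.support ⊆ p.support.map π by
    classical
    obtain ⟨q, hq⟩ := this
    exact ⟨q.bypass, q.bypass_isPath, fun z hz => hq (q.support_bypass_subset_support hz)⟩
  induction p with
  | nil => exact ⟨.nil, by simp⟩
  | @cons x y b hxy p ih =>
    obtain ⟨q, hq⟩ := ih fun s hs t ht => hπ s (by simp [hs]) t (by simp [ht])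
    by_cases hxy' : π x = π y
    · exact ⟨q.copy hxy'.symm rfl, by simpa using List.Subset.trans hq (List.subset_cons_self _ _)⟩
    · refine ⟨.cons (hπ x (by simp) y (by simp) hxy hxy') q, ?_⟩
      simpa using List.cons_subset_cons _ hq

theorem Walk.IsPath.exists_tail {G : SimpleGraph V} {a b : V} {p : G.Walk a b} (hp : p.IsPath)
    (hab : a ≠ b) :
    ∃ K : Set V, K ⊆ {x | x ∈ p.support} ∧ a ∉ K ∧ b ∈ K ∧ (G.induce K).Connected ∧
      ∃ s ∈ K, G.Adj a s := by
  obtain ⟨s, has, tail, rfl⟩ := Walk.not_nil_iff.1 (Walk.not_nil_of_ne (p := p) hab)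
  refine ⟨{x | x ∈ tail.support}, fun x hx => by simp [show x ∈ tail.support from hx],
    ((Walk.cons_isPath_iff _ _).1 hp).2, tail.end_mem_support, tail.connected_induce_support,
    s, tail.start_mem_support, has⟩

def addPendant (G : SimpleGraph V) (b : V) : SimpleGraph (Option V) :=
  G.map some ⊔ edge none (some b)

variable {G : SimpleGraph V} {b : V}

@[simp]
theorem addPendant_adj_some {x y : V} : (G.addPendant b).Adj (some x) (some y) ↔ G.Adj x y := by
  simp only [addPendant, sup_adj, map_adj', edge_adj, Option.some_inj, reduceCtorEq, false_and,
    and_false, or_self, or_false, exists_eq_right_right, exists_eq_right]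
  exact ⟨And.right, fun h => ⟨Option.some_injective _ |>.ne h.ne, h⟩⟩

theorem addPendant_adj_none : (G.addPendant b).Adj none (some b) := by
  simp [addPendant, edge_adj]

def toAddPendant : G →g G.addPendant b := ⟨some, addPendant_adj_some.2⟩

end SimpleGraph

section Collapse

variable {β : Type*}

open Classical in
noncomputable def collapseTo (K : Set β) (b x : β) : β := if x ∈ K then b else x

variable {K : Set β} {b x : β}

theorem collapseTo_of_mem (hx : x ∈ K) : collapseTo K b x = b := if_pos hx

theorem collapseTo_of_notMem (hx : x ∉ K) : collapseTo K b x = x := if_neg hx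

theorem preimage_collapseTo_self (hb : b ∈ K) : collapseTo K b ⁻¹' {b} = K := by
  ext x
  by_cases hx : x ∈ K
  · simp [collapseTo_of_mem hx, hx]
  · simpa [collapseTo_of_notMem hx, hx] using fun h : x = b => hx (h ▸ hb)

theorem preimage_collapseTo_of_notMem (hb : b ∈ K) {c : β} (hc : c ∉ K) :
    collapseTo K b ⁻¹' {c} = {c} := by
  ext x
  by_cases hx : x ∈ K
  · simp only [Set.mem_preimage, Set.mem_singleton_iff, collapseTo_of_mem hx]
    exact iff_of_false (fun h => hc (h ▸ hb)) (fun h => hc (h ▸ hx))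
  · simp [collapseTo_of_notMem hx]

end Collapse

section ExtendByNone

variable {α β : Type}

open Classical in
noncomputable def extendByNone (u : α) (f : ({u}ᶜ : Set α) ↪ β) : α ↪ Option β where
  toFun v := if h : v = u then none else some (f ⟨v, h⟩)
  inj' v v' h := by
    by_cases hv : v = u <;> by_cases hv' : v' = u <;> simp_all [Subtype.ext_iff]

variable {u : α} {f : ({u}ᶜ : Set α) ↪ β}

@[simp]
theorem extendByNone_self : extendByNone u f u = none :=
  dif_pos rfl

theorem extendByNone_of_ne {v : α} (hv : v ≠ u) : extendByNone u f v = some (f ⟨v, hv⟩) :=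
  dif_neg hv

end ExtendByNone

namespace HScheme

variable {α β : Type} {H : SimpleGraph α} {G : SimpleGraph β} {f : α ↪ β}

def support (S : HScheme H G f) (u v : α) (h : H.Adj u v) : Set β :=
  {x | x ∈ (S.path u v h).support}

theorem support_symm (S : HScheme H G f) {u v : α} (h : H.Adj u v) :
    S.support v u h.symm = S.support u v h := by
  ext x
  simp only [support, S.path_symm u v h, Walk.support_reverse, List.mem_reverse]

theorem apply_notMem_support (S : HScheme H G f) {u v z : α} (h : H.Adj u v) (hu : z ≠ u)
    (hv : z ≠ v) : f z ∉ S.support u v h := fun hz =>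
  (S.root_mem u v h z hz).elim hu hv

theorem eq_or_eq_of_mem_support (S : HScheme H G f) {u w v v' : α} {huw : H.Adj u w}
    {h : H.Adj v v'} {x : β} (hx : x ∈ S.support v v' h) (hx' : x ∈ S.support u w huw)
    (hv : v ≠ u) (hv' : v' ≠ u) : v = w ∨ v' = w := by
  obtain ⟨z, hz⟩ := S.common_endpoint x ⟨v, v', h, hx⟩
  rcases hz u w huw hx' with rfl | rfl
  · exact ((hz v v' h hx).elim (fun h => hv h.symm) fun h => hv' h.symm).elim
  · exact (hz v v' h hx).imp Eq.symm Eq.symm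

theorem nonempty_of_supports (T : ∀ u v, H.Adj u v → Set β)
    (symm : ∀ u v (h : H.Adj u v), T v u h.symm = T u v h)
    (path : ∀ u v (h : H.Adj u v),
      ∃ p : G.Walk (f u) (f v), p.IsPath ∧ ∀ x ∈ p.support, x ∈ T u v h)
    (root : ∀ u v (h : H.Adj u v) z, f z ∈ T u v h → z = u ∨ z = v)
    (common : ∀ x ∉ Set.range f, (∃ u v h, x ∈ T u v h) →
      ∃ z, ∀ u v (h : H.Adj u v), x ∈ T u v h → z = u ∨ z = v) :
    Nonempty (HScheme H G f) := by
  choose p hp hpT using path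
  let _ : LinearOrder α := IsWellOrder.linearOrder WellOrderingRel
  let q : ∀ u v, H.Adj u v → G.Walk (f u) (f v) := fun u v h =>
    if u < v then p u v h else (p v u h.symm).reverse
  have hqT : ∀ u v h, ∀ x ∈ (q u v h).support, x ∈ T u v h := by
    intro u v h x hx
    by_cases huv : u < v
    · simp only [q, if_pos huv] at hx
      exact hpT u v h x hx
    · simp only [q, if_neg huv, Walk.support_reverse, List.mem_reverse] at hx
      exact symm u v h ▸ hpT v u h.symm x hx
  refine ⟨⟨q, fun u v h => ?_, fun u v h => ?_, fun u v h z hz => root u v h z (hqT u v h _ hz),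
    fun x ⟨u, v, h, hx⟩ => ?_⟩⟩
  · rcases lt_or_gt_of_ne h.ne with huv | hvu
    · simp [q, huv, huv.not_gt]
    · simp [q, hvu, hvu.not_gt]
  · by_cases huv : u < v
    · simpa [q, huv] using hp u v h
    · simpa [q, huv] using (hp v u h.symm).reverse
  · by_cases hx' : x ∈ Set.range f
    · obtain ⟨z, rfl⟩ := hx'
      exact ⟨z, fun u v h hz => root u v h z (hqT u v h _ hz)⟩
    · obtain ⟨z, hz⟩ := common x hx' ⟨u, v, h, hqT u v h x hx⟩
      exact ⟨z, fun u v h hx => hz u v h (hqT u v h x hx)⟩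

theorem exists_isPath_addPendant {u : α} {w : ({u}ᶜ : Set α)} (hw : ∀ v, H.Adj u v → v = w)
    {f : ({u}ᶜ : Set α) ↪ β} (S : HScheme (H.induce {u}ᶜ) G f) {v v' : α} (h : H.Adj v v') :
    ∃ p : (G.addPendant (f w)).Walk (extendByNone u f v) (extendByNone u f v'), p.IsPath ∧
      ∀ x ∈ p.support, x = extendByNone u f v ∨ x = extendByNone u f v' ∨
        ∃ (hv : v ≠ u) (hv' : v' ≠ u), x ∈ some '' S.support ⟨v, hv⟩ ⟨v', hv'⟩ h := by
  have hadj : (G.addPendant (f w)).Adj (extendByNone u f u) (extendByNone u f w) := by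
    rw [extendByNone_self, extendByNone_of_ne w.2]; exact addPendant_adj_none
  by_cases hv : v = u
  · subst hv
    obtain rfl := hw v' h
    exact ⟨hadj.toWalk, hadj.isPath_toWalk, by simp [hadj.support_toWalk]⟩
  by_cases hv' : v' = u
  · subst hv'
    obtain rfl := hw v h.symm
    exact ⟨hadj.symm.toWalk, hadj.symm.isPath_toWalk, by simp [hadj.symm.support_toWalk]⟩
  rw [extendByNone_of_ne hv, extendByNone_of_ne hv']
  let p := (S.path ⟨v, hv⟩ ⟨v', hv'⟩ h).map (toAddPendant (b := f w))
  refine ⟨p, (S.path_isPath _ _ _).map (Option.some_injective _), fun x hx => ?_⟩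
  replace hx : x ∈ p.support := hx
  rw [Walk.support_map, List.mem_map] at hx
  exact .inr (.inr ⟨hv, hv', hx⟩)

theorem nonempty_addPendant {u : α} {w : ({u}ᶜ : Set α)} (hw : ∀ v, H.Adj u v → v = w)
    {f : ({u}ᶜ : Set α) ↪ β} (S : HScheme (H.induce {u}ᶜ) G f) :
    Nonempty (HScheme H (G.addPendant (f w)) (extendByNone u f)) := by
  set F := extendByNone u f
  let T : ∀ v v', H.Adj v v' → Set (Option β) := fun v v' h =>
    {x | x = F v ∨ x = F v' ∨
      ∃ (hv : v ≠ u) (hv' : v' ≠ u), x ∈ some '' S.support ⟨v, hv⟩ ⟨v', hv'⟩ h}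
  have mem_T : ∀ {v v' h x}, x ∈ T v v' h → x ∉ Set.range F →
      ∃ (hv : v ≠ u) (hv' : v' ≠ u), x ∈ some '' S.support ⟨v, hv⟩ ⟨v', hv'⟩ h := by
    rintro v v' h x (rfl | rfl | hx) hxF
    · exact absurd ⟨_, rfl⟩ hxF
    · exact absurd ⟨_, rfl⟩ hxF
    · exact hx
  refine nonempty_of_supports T (fun v v' h => ?_) (fun v v' h => S.exists_isPath_addPendant hw h)
    (fun v v' h z hz => ?_) (fun x hx ⟨v, v', h, hxT⟩ => ?_)
  · ext x
    refine or_left_comm.trans (or_congr_right (or_congr_right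
      ⟨fun ⟨hv', hv, hx⟩ => ⟨hv, hv', ?_⟩, fun ⟨hv, hv', hx⟩ => ⟨hv', hv, ?_⟩⟩))
    · rwa [S.support_symm] at hx
    · rwa [S.support_symm]
  · rcases hz with hz | hz | ⟨hv, hv', y, hy, hyz⟩
    · exact .inl (F.injective hz)
    · exact .inr (F.injective hz)
    have hz : z ≠ u := by rintro rfl; simp [F] at hyz
    rw [extendByNone_of_ne hz, Option.some_inj] at hyz
    subst hyz
    exact (S.root_mem ⟨v, hv⟩ ⟨v', hv'⟩ h ⟨z, hz⟩ hy).imp (congrArg Subtype.val)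
      (congrArg Subtype.val)
  · obtain ⟨hv, hv', y, hy, rfl⟩ := mem_T hxT hx
    obtain ⟨z, hz⟩ := S.common_endpoint y ⟨⟨v, hv⟩, ⟨v', hv'⟩, h, hy⟩
    refine ⟨z, fun a b hab hyab => ?_⟩
    obtain ⟨ha, hb, y', hy', hy'y⟩ := mem_T hyab hx
    rw [Option.some_inj] at hy'y
    subst hy'y
    exact (hz ⟨a, ha⟩ ⟨b, hb⟩ hab hy').imp (congrArg Subtype.val) (congrArg Subtype.val)

theorem collapseTo_apply_of_ne (S : HScheme H G f) {u w : α} (huw : H.Adj u w) {K : Set β}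
    (hK : K ⊆ S.support u w huw) {v : α} (hv : v ≠ u) : collapseTo K (f w) (f v) = f v := by
  by_cases hvK : f v ∈ K
  · rcases S.root_mem u w huw v (hK hvK) with h | rfl
    · exact absurd h hv
    · exact collapseTo_of_mem hvK
  · exact collapseTo_of_notMem hvK

theorem exists_isPath_collapse (S : HScheme H G f) {u w : α} (huw : H.Adj u w) {K : Set β}
    (hK : K ⊆ S.support u w huw) {v v' : α} (h : H.Adj v v') (hv : v ≠ u) (hv' : v' ≠ u) :
    ∃ p : ((G.map (collapseTo K (f w))).deleteIncidenceSet (f u)).Walk (f v) (f v'),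
      p.IsPath ∧ ∀ x ∈ p.support, x ∈ collapseTo K (f w) '' S.support v v' h := by
  have hπ_ne : ∀ x ∈ (S.path v v' h).support, collapseTo K (f w) x ≠ f u := by
    intro x hx
    by_cases hxK : x ∈ K
    · rw [collapseTo_of_mem hxK]; exact f.injective.ne huw.ne'
    · rw [collapseTo_of_notMem hxK]
      rintro rfl
      exact S.apply_notMem_support h (Ne.symm hv) (Ne.symm hv') hx
  obtain ⟨q, hq, hqp⟩ := (S.path v v' h).exists_isPath_support_subset_map
    (G' := (G.map (collapseTo K (f w))).deleteIncidenceSet (f u)) fun x hx y hy hxy hπxy =>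
      deleteIncidenceSet_adj.2 ⟨(map_adj' _ _ _ _).2 ⟨hπxy, x, y, hxy, rfl, rfl⟩,
        hπ_ne x hx, hπ_ne y hy⟩
  have hπv := S.collapseTo_apply_of_ne huw hK hv
  have hπv' := S.collapseTo_apply_of_ne huw hK hv'
  refine ⟨q.copy hπv hπv', (Walk.isPath_copy _ _ _).2 hq, fun x hx => ?_⟩
  rw [Walk.support_copy] at hx
  obtain ⟨y, hy, rfl⟩ := List.mem_map.1 (hqp hx)
  exact ⟨y, hy, rfl⟩

theorem nonempty_collapse (S : HScheme H G f) {u w : α} (huw : H.Adj u w) {K : Set β}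
    (hK : K ⊆ S.support u w huw) :
    Nonempty (HScheme (H.induce {u}ᶜ) ((G.map (collapseTo K (f w))).deleteIncidenceSet (f u))
      ((Function.Embedding.subtype _).trans f)) := by
  set π := collapseTo K (f w)
  have hπK : ∀ x ∈ K, π x = f w := fun x hx => collapseTo_of_mem hx
  have hπnK : ∀ x ∉ K, π x = x := fun x hx => collapseTo_of_notMem hx
  have mem_of_mem_image : ∀ (a b : ({u}ᶜ : Set α)) (h : H.Adj a b) x, x ≠ f w →
      x ∈ π '' S.support a b h → x ∈ S.support a b h := by
    rintro a b h x hx ⟨y, hy, rfl⟩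
    by_cases hyK : y ∈ K
    · exact absurd (hπK y hyK) hx
    · rwa [hπnK y hyK]
  refine nonempty_of_supports (fun a b h => π '' S.support a b h)
    (fun a b h => by rw [S.support_symm (u := a) (v := b) h])
    (fun a b h => S.exists_isPath_collapse huw hK h a.2 b.2)
    (fun a b h z hz => ?_) (fun x hx ⟨a, b, h, hxT⟩ => ?_)
  · obtain ⟨y, hy, hyz⟩ := hz
    by_cases hyK : y ∈ K
    · have hzw : (z : α) = w := f.injective (hyz.symm.trans (hπK y hyK))
      exact (S.eq_or_eq_of_mem_support hy (hK hyK) a.2 b.2).imp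
        (fun h' => Subtype.ext (hzw.trans h'.symm)) (fun h' => Subtype.ext (hzw.trans h'.symm))
    · rw [hπnK y hyK] at hyz
      exact (S.root_mem a b h z (hyz ▸ hy)).imp Subtype.ext Subtype.ext
  · have hxw : x ≠ f w := fun hxw => hx ⟨⟨w, huw.ne'⟩, hxw.symm⟩
    have hx' := mem_of_mem_image a b h x hxw hxT
    obtain ⟨z, hz⟩ := S.common_endpoint x ⟨a, b, h, hx'⟩
    have hzu : z ≠ u := by
      rcases hz a b h hx' with rfl | rfl
      · exact a.2
      · exact b.2
    exact ⟨⟨z, hzu⟩, fun a' b' h' hx' =>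
      (hz a' b' h' (mem_of_mem_image a' b' h' x hxw hx')).imp Subtype.ext Subtype.ext⟩

end HScheme

section RootedMinorModel

variable {α β γ : Type} {H : SimpleGraph α} {G : SimpleGraph β} {f : α ↪ β}

structure IsRootedMinorModel (H : SimpleGraph α) (G : SimpleGraph β) (f : α ↪ β)
    (C : α → Set β) : Prop where
  root_mem : ∀ v, f v ∈ C v
  connected : ∀ v, (G.induce (C v)).Connected
  disjoint : Pairwise fun u v => Disjoint (C u) (C v)
  adj : ∀ u v, H.Adj u v → ∃ x ∈ C u, ∃ y ∈ C v, G.Adj x y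

theorem rootedMinor_iff : RootedMinor H G f ↔ ∃ C, IsRootedMinorModel H G f C :=
  ⟨fun ⟨C, h₁, h₂, h₃, h₄⟩ => ⟨C, h₁, h₂, h₃, h₄⟩, fun ⟨C, h₁, h₂, h₃, h₄⟩ => ⟨C, h₁, h₂, h₃, h₄⟩⟩

namespace IsRootedMinorModel

theorem induce {C : α → Set β} (hC : IsRootedMinorModel H G f C) (s : Set α) :
    IsRootedMinorModel (H.induce s) G ((Function.Embedding.subtype s).trans f) (fun v => C v) :=
  ⟨fun v => hC.root_mem v, fun v => hC.connected v,
    fun _ _ huv => hC.disjoint (Subtype.coe_injective.ne huv), fun u v huv => hC.adj u v huv⟩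

theorem preimage {G' : SimpleGraph γ} {f' : α ↪ γ} {π : β → γ} {C : α → Set γ}
    (hC : IsRootedMinorModel H G' f' C) (hf : ∀ v, π (f v) = f' v)
    (hfib : ∀ v, ∀ c ∈ C v, (G.induce (π ⁻¹' {c})).Connected)
    (hadj : ∀ v v', ∀ a ∈ C v, ∀ b ∈ C v', G'.Adj a b → ∃ x y, G.Adj x y ∧ π x = a ∧ π y = b) :
    IsRootedMinorModel H G f (fun v => π ⁻¹' C v) := by
  refine ⟨fun v => ?_, fun v => ?_, fun _ _ huv => (hC.disjoint huv).preimage π, fun u v huv => ?_⟩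
  · simpa [hf] using hC.root_mem v
  · exact connected_induce_preimage_s17 (hC.connected v) (hfib v) (hadj v v)
  · obtain ⟨a, ha, b, hb, hab⟩ := hC.adj u v huv
    obtain ⟨x, y, hxy, rfl, rfl⟩ := hadj u v a ha b hb hab
    exact ⟨x, ha, y, hb, hxy⟩

theorem rootedMinor_of_induce_compl_singleton {u : α} {C : ({u}ᶜ : Set α) → Set β}
    (hC : IsRootedMinorModel (H.induce {u}ᶜ) G ((Function.Embedding.subtype _).trans f) C)
    (hfu : ∀ v, f u ∉ C v) (hnbr : ∀ v : ({u}ᶜ : Set α), H.Adj u v → ∃ x ∈ C v, G.Adj (f u) x) :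
    RootedMinor H G f := by
  classical
  let C' : α → Set β := fun v => if h : v = u then {f u} else C ⟨v, h⟩
  have hC'u : C' u = {f u} := dif_pos rfl
  have hC'v : ∀ v : ({u}ᶜ : Set α), C' v = C v := fun v => dif_neg v.2
  have cases : ∀ v, v = u ∨ ∃ v' : ({u}ᶜ : Set α), v = v' := fun v =>
    (eq_or_ne v u).imp_right fun h => ⟨⟨v, h⟩, rfl⟩
  refine rootedMinor_iff.2 ⟨C', fun v => ?_, fun v => ?_, fun v v' hvv' => ?_, fun v v' h => ?_⟩
  · rcases cases v with rfl | ⟨v, rfl⟩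
    · simp [hC'u]
    · simpa [hC'v] using hC.root_mem v
  · rcases cases v with rfl | ⟨v, rfl⟩
    · rw [hC'u]; exact .of_subsingleton
    · rw [hC'v]; exact hC.connected v
  · rcases cases v with rfl | ⟨v, rfl⟩ <;> rcases cases v' with rfl | ⟨v', rfl⟩
    · exact absurd rfl hvv'
    · simpa [hC'u, hC'v] using hfu v'
    · simpa [hC'u, hC'v] using hfu v
    · simpa [hC'v] using hC.disjoint (ne_of_apply_ne Subtype.val hvv')
  · rcases cases v with rfl | ⟨v, rfl⟩ <;> rcases cases v' with rfl | ⟨v', rfl⟩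
    · exact (h.ne rfl).elim
    · simpa [hC'u, hC'v] using hnbr v' h
    · obtain ⟨x, hx, hux⟩ := hnbr v h.symm
      exact ⟨x, by simpa [hC'v] using hx, f _, by simp [hC'u], hux.symm⟩
    · simpa [hC'v] using hC.adj v v' h

end IsRootedMinorModel

end RootedMinorModel

namespace IsRootedContractible

variable {α : Type} {H : SimpleGraph α} {u : α} {w : ({u}ᶜ : Set α)}

theorem induce_compl_singleton (hw : ∀ v, H.Adj u v → v = w) (hH : IsRootedContractible H) :
    IsRootedContractible (H.induce {u}ᶜ) := by
  intro β _ G f ⟨S⟩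
  obtain ⟨C, hC⟩ := rootedMinor_iff.1 (hH _ _ _ (S.nonempty_addPendant hw))
  have hsome : ∀ v : ({u}ᶜ : Set α), ∀ c ∈ C v, ∃ b, c = some b := by
    intro v c hc
    refine Option.ne_none_iff_exists'.1 fun hc' => ?_
    have hu : none ∈ C u := extendByNone_self (f := f) ▸ hC.root_mem u
    exact (hC.disjoint v.2).ne_of_mem hc hu hc'
  refine rootedMinor_iff.2 ⟨_, (hC.induce {u}ᶜ).preimage (π := some)
    (fun v => (extendByNone_of_ne v.2).symm) (fun v c hc => ?_) (fun v v' a ha b hb hab => ?_)⟩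
  · obtain ⟨b, rfl⟩ := hsome v c hc
    rw [show (some ⁻¹' {some b} : Set β) = {b} by ext; simp]
    exact .of_subsingleton
  · obtain ⟨x, rfl⟩ := hsome v a ha
    obtain ⟨y, rfl⟩ := hsome v' b hb
    exact ⟨x, y, addPendant_adj_some.1 hab, rfl, rfl⟩

theorem of_induce_compl_singleton (hw : ∀ v, H.Adj u v ↔ v = w)
    (hH : IsRootedContractible (H.induce {u}ᶜ)) : IsRootedContractible H := by
  intro β _ G f ⟨S⟩
  have huw : H.Adj u w := (hw w).2 rfl
  obtain ⟨K, hKP, hfuK, hfwK, hK, s, hsK, hus⟩ :=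
    (S.path_isPath u w huw).exists_tail (f.injective.ne huw.ne)
  set π := collapseTo K (f w)
  have hπK : ∀ x ∈ K, π x = f w := fun x hx => collapseTo_of_mem hx
  have hπnK : ∀ x ∉ K, π x = x := fun x hx => collapseTo_of_notMem hx
  obtain ⟨C, hC⟩ := rootedMinor_iff.1 (hH β _ _ (S.nonempty_collapse huw hKP))
  -- `f u` and the vertices of `K` other than `f w` are isolated in the contracted graph,
  -- so a branch set can contain them only as its root.
  have hrange : ∀ v, ∀ c ∈ C v, c ≠ f u ∧ ∃ y, π y = c := by
    intro v c hc
    by_cases hcv : c = f v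
    · subst hcv
      exact ⟨f.injective.ne v.2, _, S.collapseTo_apply_of_ne huw hKP v.2⟩
    · obtain ⟨d, hcd⟩ := exists_adj_of_connected_induce (hC.connected v) hc (hC.root_mem v) hcv
      obtain ⟨⟨-, x, y, -, hx, -⟩, hcu, -⟩ := deleteIncidenceSet_adj.1 hcd
      exact ⟨hcu, x, hx⟩
  refine (hC.preimage (π := π) (fun v => S.collapseTo_apply_of_ne huw hKP v.2)
    (fun v c hc => ?_) (fun v v' a _ b _ hab => ?_)).rootedMinor_of_induce_compl_singleton
    (fun v hfu => ?_) (fun v huv => ?_)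
  · obtain ⟨-, y, rfl⟩ := hrange v c hc
    by_cases hy : y ∈ K
    · rwa [hπK y hy, preimage_collapseTo_self hfwK]
    · rw [hπnK y hy, preimage_collapseTo_of_notMem hfwK hy]
      exact .of_subsingleton
  · obtain ⟨⟨-, x, y, hxy, rfl, rfl⟩, -, -⟩ := deleteIncidenceSet_adj.1 hab
    exact ⟨x, y, hxy, rfl, rfl⟩
  · exact (hrange v _ ((hπnK _ hfuK).symm ▸ hfu)).1 rfl
  · obtain rfl : v = w := Subtype.ext ((hw v).1 huv)
    exact ⟨s, show π s ∈ C v from hπK s hsK ▸ hC.root_mem v, hus⟩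

end IsRootedContractible

theorem leaf_rooted_contractible_iff_general {α : Type} [Fintype α]
    (H : SimpleGraph α) [DecidableRel H.Adj] (u : α) (hu : H.degree u = 1) :
    IsRootedContractible H ↔ IsRootedContractible (H.induce ({u} : Set α)ᶜ) := by
  obtain ⟨w, hw⟩ := Finset.card_eq_one.1 hu
  have hadj : ∀ v, H.Adj u v ↔ v = w := fun v => by
    rw [← mem_neighborFinset, hw, Finset.mem_singleton]
  have hwu : w ≠ u := ((hadj w).2 rfl).ne'
  exact ⟨IsRootedContractible.induce_compl_singleton (w := ⟨w, hwu⟩) fun v => (hadj v).1,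
    IsRootedContractible.of_induce_compl_singleton (w := ⟨w, hwu⟩) hadj⟩

/-- If `u` is a vertex of degree 1 in `H`, then `H` is
rooted-contractible iff `H − u` is rooted-contractible. -/
theorem leaf_rooted_contractible_iff {α : Type} [Fintype α] [DecidableEq α]
    (H : SimpleGraph α) [DecidableRel H.Adj] (u : α) (hu : H.degree u = 1) :
    IsRootedContractible H ↔ IsRootedContractible (H.induce ({u} : Set α)ᶜ) :=
  leaf_rooted_contractible_iff_general H u hu
end
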